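/- arXiv:2003.09584 — 5 statements merged into one kernel-verified Lean document; each statement's English description precedes it below -/
import Mathlib

section
/- Let X_n be positive random variables, a_n arbitrary real numbers, and b_n > 0 with b_n → 0 as n → ∞. Then ln X_n ~ ASN(a_n, b_n) if and only if X_n ~ ASN(e^{a_n}, b_n e^{2 a_n}). That is, (ln X_n − a_n)/√b_n converges in distribution to N(0,1) if and only if (X_n − e^{a_n})/(√b_n · e^{a_n}) converges in distribution to N(0,1). -/
/-! With `s = √b`, `Y = (log X - a) / s` and `Z = (X - eᵃ) / (s eᵃ)` one has
`Z = (exp (s Y) - 1) / s` and `Y = log (1 + s Z) / s`. Since `exp t - 1` and `log (1 + t)` have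
derivative `1` at `0`, the maps `y ↦ φ (s y) / s` tend to the identity locally uniformly as
`s → 0`. Such maps do not change a limit in distribution: the laws of a convergent sequence are
tight (Prokhorov), so outside one compact set of small probability the perturbation is uniformly
small, and Slutsky's lemma applies. -/

open MeasureTheory ProbabilityTheory Filter Topology

/-- `X n ~ ASN(a n, b n)` is expressed as: `(X n - a n)/√(b n)` converges in distribution
to the measure `ν` (here the standard normal), where convergence in distribution is
tested against all bounded continuous functions. -/
def TendstoInDistribution {Ω : Type*} [MeasurableSpace Ω] (μ : Measure Ω)
    (X : ℕ → Ω → ℝ) (ν : Measure ℝ) : Prop :=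
  ∀ f : BoundedContinuousFunction ℝ ℝ,
    Tendsto (fun n => ∫ ω, f (X n ω) ∂μ) atTop (𝓝 (∫ x, f x ∂ν))

theorem tendstoLocallyUniformly_div_comp_mul {𝕜 ι : Type*} [NontriviallyNormedField 𝕜]
    {φ : 𝕜 → 𝕜} (hφ : HasDerivAt φ 1 0) (hφ0 : φ 0 = 0) {l : Filter ι} {s : ι → 𝕜}
    (hs : Tendsto s l (𝓝[≠] 0)) :
    TendstoLocallyUniformly (fun i y => φ (s i * y) / s i) id l := by
  rw [Metric.tendstoLocallyUniformly_iff]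
  intro ε hε x
  set M := ‖x‖ + 1
  have hM : 0 < M := by positivity
  have hlin : ∀ᶠ t in 𝓝 0, ‖φ t - t‖ ≤ ε / M * ‖t‖ := by
    simpa [hφ0] using (hasDerivAt_iff_isLittleO.mp hφ).def (div_pos hε hM)
  obtain ⟨δ, hδ, hball⟩ := Metric.eventually_nhds_iff_ball.mp hlin
  have hsmall : ∀ᶠ i in l, s i ∈ {0}ᶜ ∩ Metric.ball 0 (δ / M) :=
    hs (inter_mem_nhdsWithin _ (Metric.ball_mem_nhds 0 (div_pos hδ hM)))
  refine ⟨Metric.ball x 1, Metric.ball_mem_nhds x one_pos, ?_⟩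
  filter_upwards [hsmall] with i ⟨(hs0 : s i ≠ 0), hsi⟩ y hy
  rw [mem_ball_zero_iff] at hsi
  have hyM : ‖y‖ < M := by
    have := norm_le_norm_add_norm_sub' y x
    rw [Metric.mem_ball, dist_eq_norm] at hy
    simp only [M]; linarith
  have hsy : s i * y ∈ Metric.ball 0 δ := by
    rw [mem_ball_zero_iff, norm_mul]
    calc ‖s i‖ * ‖y‖ ≤ ‖s i‖ * M := by gcongr
      _ < δ / M * M := by gcongr
      _ = δ := div_mul_cancel₀ δ hM.ne'
  calc dist (id y) (φ (s i * y) / s i) = ‖φ (s i * y) - s i * y‖ / ‖s i‖ := by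
        rw [dist_comm, dist_eq_norm, id, ← norm_div, sub_div, mul_div_cancel_left₀ y hs0]
    _ ≤ ε / M * ‖s i * y‖ / ‖s i‖ := by gcongr; exact hball _ hsy
    _ = ε / M * ‖y‖ := by rw [norm_mul]; field_simp
    _ < ε / M * M := by gcongr
    _ = ε := div_mul_cancel₀ ε hM.ne'

theorem MeasureTheory.TendstoInDistribution.comp_of_tendstoLocallyUniformly
    {E Ω Ω' : Type*} [NormedAddCommGroup E] [CompleteSpace E] [SecondCountableTopology E]
    [MeasurableSpace E] [BorelSpace E] {mΩ : MeasurableSpace Ω} {μ : Measure Ω}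
    [IsProbabilityMeasure μ] {mΩ' : MeasurableSpace Ω'} {μ' : Measure Ω'}
    [IsProbabilityMeasure μ'] {X : ℕ → Ω → E} {Z : Ω' → E}
    (hX : TendstoInDistribution X atTop Z (fun _ => μ) μ') {g : ℕ → E → E}
    (hg : TendstoLocallyUniformly g id atTop) (hgm : ∀ n, Measurable (g n)) :
    TendstoInDistribution (fun n => g n ∘ X n) atTop Z (fun _ => μ) μ' := by
  have hXm := hX.forall_aemeasurable
  refine tendstoInDistribution_of_tendstoInMeasure_sub _ Z hX ?_
    (fun n => (hgm n).comp_aemeasurable (hXm n))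
  have htight := isTightMeasureSet_of_isCompact_closure
    (hX.tendsto.isCompact_insert_range.isClosed.closure_eq ▸ hX.tendsto.isCompact_insert_range)
  rw [isTightMeasureSet_iff_exists_isCompact_measure_compl_le] at htight
  rw [tendstoInMeasure_iff_norm]
  intro ε hε
  refine ENNReal.tendsto_nhds_zero.mpr fun δ hδ => ?_
  obtain ⟨K, hK, hKδ⟩ := htight δ hδ
  have hunif := Metric.tendstoUniformlyOn_iff.mp
    ((tendstoLocallyUniformlyOn_iff_tendstoUniformlyOn_of_compact hK).mp
      hg.tendstoLocallyUniformlyOn) ε hε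
  filter_upwards [hunif] with n hn
  calc μ {ω | ε ≤ ‖(fun n => g n ∘ X n) n ω - X n ω - 0‖}
      ≤ μ (X n ⁻¹' Kᶜ) := by
        refine measure_mono fun ω hω hωK => (hn _ hωK).not_ge ?_
        simpa [dist_eq_norm'] using hω
    _ = μ.map (X n) Kᶜ :=
        (Measure.map_apply_of_aemeasurable (hXm n) hK.isClosed.measurableSet.compl).symm
    _ ≤ δ := hKδ _ ⟨_, Set.mem_insert_of_mem _ ⟨n, rfl⟩, rfl⟩

theorem tendstoInDistribution_iff_tendstoInDistribution_id {Ω : Type*} [MeasurableSpace Ω]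
    {μ : Measure Ω} [IsProbabilityMeasure μ] {X : ℕ → Ω → ℝ} (hX : ∀ n, AEMeasurable (X n) μ)
    {ν : Measure ℝ} [IsProbabilityMeasure ν] :
    TendstoInDistribution μ X ν ↔
      MeasureTheory.TendstoInDistribution X atTop id (fun _ => μ) ν := by
  have hmap : ∀ (n : ℕ) (f : BoundedContinuousFunction ℝ ℝ),
      ∫ x, f x ∂(μ.map (X n)) = ∫ ω, f (X n ω) ∂μ := fun n f =>
    integral_map (hX n) f.continuous.aestronglyMeasurable
  constructor
  · intro h
    refine ⟨hX, aemeasurable_id,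
      ProbabilityMeasure.tendsto_iff_forall_integral_tendsto.mpr fun f => ?_⟩
    simpa only [ProbabilityMeasure.coe_mk, hmap, Measure.map_id] using h f
  · intro h f
    have := ProbabilityMeasure.tendsto_iff_forall_integral_tendsto.mp h.tendsto f
    simpa only [ProbabilityMeasure.coe_mk, hmap, Measure.map_id] using this

theorem exp_mul_log_sub_div_sub_one_div {x s : ℝ} (hx : 0 < x) (hs : s ≠ 0) (a : ℝ) :
    (Real.exp (s * ((Real.log x - a) / s)) - 1) / s = (x - Real.exp a) / (s * Real.exp a) := by
  rw [mul_div_cancel₀ _ hs, Real.exp_sub, Real.exp_log hx]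
  field_simp

theorem log_one_add_mul_sub_exp_div {x s : ℝ} (hx : 0 < x) (hs : s ≠ 0) (a : ℝ) :
    Real.log (1 + s * ((x - Real.exp a) / (s * Real.exp a))) / s = (Real.log x - a) / s := by
  have hx' : 1 + s * ((x - Real.exp a) / (s * Real.exp a)) = x / Real.exp a := by
    field_simp
    ring
  rw [hx', Real.log_div hx.ne' (Real.exp_ne_zero a), Real.log_exp]

/-- Lemma 2.2: for positive random variables `X n` and `b n → 0`,
`ln X_n ~ ASN(a_n, b_n)` iff `X_n ~ ASN(e^{a_n}, b_n e^{2 a_n})`. -/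
theorem log_asn_iff_asn {Ω : Type*} [MeasurableSpace Ω] (μ : Measure Ω)
    [IsProbabilityMeasure μ] (X : ℕ → Ω → ℝ) (hXmeas : ∀ n, Measurable (X n))
    (hXpos : ∀ n ω, 0 < X n ω)
    (a b : ℕ → ℝ) (hb : ∀ n, 0 < b n) (hb0 : Tendsto b atTop (𝓝 0)) :
    TendstoInDistribution μ
        (fun n ω => (Real.log (X n ω) - a n) / Real.sqrt (b n)) (gaussianReal 0 1)
      ↔ TendstoInDistribution μ
        (fun n ω => (X n ω - Real.exp (a n)) / (Real.sqrt (b n) * Real.exp (a n)))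
        (gaussianReal 0 1) := by
  have hs0 : ∀ n, Real.sqrt (b n) ≠ 0 := fun n => (Real.sqrt_pos.mpr (hb n)).ne'
  have hs : Tendsto (fun n => Real.sqrt (b n)) atTop (𝓝[≠] 0) :=
    tendsto_nhdsWithin_iff.mpr ⟨by simpa using hb0.sqrt, .of_forall hs0⟩
  have hexp : HasDerivAt (fun t => Real.exp t - 1) 1 0 := by
    simpa using (Real.hasDerivAt_exp 0).sub_const 1
  have hlog : HasDerivAt (fun t => Real.log (1 + t)) 1 0 := by
    simpa using ((hasDerivAt_id (0 : ℝ)).const_add 1).log (by norm_num)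
  rw [tendstoInDistribution_iff_tendstoInDistribution_id (by fun_prop),
    tendstoInDistribution_iff_tendstoInDistribution_id (by fun_prop)]
  constructor
  · intro h
    simpa only [Function.comp_def, exp_mul_log_sub_div_sub_one_div (hXpos _ _) (hs0 _)] using
      h.comp_of_tendstoLocallyUniformly (tendstoLocallyUniformly_div_comp_mul hexp (by simp) hs)
        (fun n => by fun_prop)
  · intro h
    simpa only [Function.comp_def, log_one_add_mul_sub_exp_div (hXpos _ _) (hs0 _)] using
      h.comp_of_tendstoLocallyUniformly (tendstoLocallyUniformly_div_comp_mul hlog (by simp) hs)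
        (fun n => by fun_prop)
end

section
/- For every 1 ≤ ℓ ≤ m ≤ n, the variance of V_ℓ satisfies σ_ℓ² := E[V_ℓ²] ≤ B^ℓ C(n, ℓ) C(n−ℓ, m−ℓ)². -/
open MeasureTheory ProbabilityTheory Filter Topology

noncomputable section

/-- `φ_a(x) := p_a⁻¹ 1{x = a} - 1`. -/
def phi {A : Type*} [DecidableEq A] (p : A → ℝ) (a x : A) : ℝ :=
  (p a)⁻¹ * (if x = a then 1 else 0) - 1

/-- Extend a (1-indexed) sequence `β_1 < ⋯ < β_ℓ` of positions in `{1,…,n}` by the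
conventions `β_0 = 0` and `β_{ℓ+1} = n+1`.  Here `β : Fin ℓ → ℕ` lists `β_1,…,β_ℓ`. -/
def extSeq (n ℓ : ℕ) (β : Fin ℓ → ℕ) (k : Fin (ℓ + 2)) : ℕ :=
  if h0 : (k : ℕ) = 0 then 0
  else if h1 : (k : ℕ) = ℓ + 1 then n + 1
  else β ⟨(k : ℕ) - 1, by have hk := k.isLt; omega⟩

/-- The combinatorial coefficient
`c(β,γ) = ∏_{k=1}^{ℓ+1} C(β_k - β_{k-1} - 1, γ_k - γ_{k-1} - 1)`,
with `β_0 = γ_0 = 0`, `β_{ℓ+1} = n+1`, `γ_{ℓ+1} = m+1`.  The subsets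
`β ⊆ {1,…,n}` and `γ ⊆ {1,…,m}` are encoded by strictly increasing maps
`Fin ℓ → Fin n` and `Fin ℓ → Fin m` (0-indexed, whence the `+ 1`'s). -/
def gapCoeff (n m ℓ : ℕ) (β : Fin ℓ → Fin n) (γ : Fin ℓ → Fin m) : ℕ :=
  ∏ k : Fin (ℓ + 1),
    Nat.choose
      (extSeq n ℓ (fun i => (β i : ℕ) + 1) k.succ
        - extSeq n ℓ (fun i => (β i : ℕ) + 1) k.castSucc - 1)
      (extSeq m ℓ (fun i => (γ i : ℕ) + 1) k.succ
        - extSeq m ℓ (fun i => (γ i : ℕ) + 1) k.castSucc - 1)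

/-- The random variable `V_ℓ = Σ_β Σ_γ c(β,γ) ∏_{k=1}^ℓ φ_{w_{γ_k}}(ξ_{β_k})`,
where `β`, `γ` run over strictly increasing maps (i.e. `ℓ`-subsets). -/
def Vell {A : Type*} {Ω : Type*} [DecidableEq A] (p : A → ℝ) (n m : ℕ)
    (w : Fin m → A) (ξ : ℕ → Ω → A) (ℓ : ℕ) (ω : Ω) : ℝ :=
  ∑ β ∈ Finset.univ.filter (fun β : Fin ℓ → Fin n => ∀ i j : Fin ℓ, i < j → β i < β j),
    ∑ γ ∈ Finset.univ.filter (fun γ : Fin ℓ → Fin m => ∀ i j : Fin ℓ, i < j → γ i < γ j),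
      (gapCoeff n m ℓ β γ : ℝ) * ∏ k : Fin ℓ, phi p (w (γ k)) (ξ (β k : ℕ) ω)

/-!
Expanding the square, `E[V_ℓ²]` is a sum of terms
`c(β,γ) c(β',γ') E[∏_k φ(ξ_{β_k}) ∏_k φ(ξ_{β'_k})]`.
If `β ≠ β'`, some position `β_k` is not among the `β'`; by independence its factor splits off,
and `E[φ_a(ξ_i)] = 0` kills the term. If `β = β'`, independence gives
`∏_k E[φ_{w_{γ_k}} φ_{w_{γ'_k}}(ξ)] = ∏_k φ_{w_{γ_k}}(w_{γ'_k})`, of absolute value at most `B^ℓ`.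
Hence `E[V_ℓ²] ≤ B^ℓ ∑_β (∑_γ c(β,γ))²`. Now `c(β,γ) = ∏_k C(g_k(β), g_k(γ))` for the gap
sequences `g`, which sum to `n - ℓ` and `m - ℓ`, and `γ` is determined by `g(γ)`; so the
multivariate Vandermonde identity gives `∑_γ c(β,γ) ≤ C(n-ℓ, m-ℓ)`. Finally there are `C(n, ℓ)`
increasing `β`.
-/

open Finset

def gaps {r : ℕ} (a : Fin (r + 1) → ℕ) (k : Fin r) : ℕ :=
  a k.succ - a k.castSucc - 1

lemma succ_eq_add_gaps {r : ℕ} {a : Fin (r + 1) → ℕ} (ha : StrictMono a) (k : Fin r) :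
    a k.succ = a k.castSucc + gaps a k + 1 := by
  have := ha k.castSucc_lt_succ
  unfold gaps
  omega

lemma sum_gaps_add {r : ℕ} {a : Fin (r + 1) → ℕ} (ha : StrictMono a) :
    ∑ k, gaps a k + r + a 0 = a (Fin.last r) := by
  induction r with
  | zero => simp
  | succ r ih =>
    have hgaps : ∀ k : Fin r, gaps a k.castSucc = gaps (a ∘ Fin.castSucc) k := fun _ => rfl
    have hlast : a (Fin.last (r + 1)) = a (Fin.last r).castSucc + gaps a (Fin.last r) + 1 :=
      succ_eq_add_gaps ha (Fin.last r)
    have hinit := ih (ha.comp Fin.strictMono_castSucc)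
    simp only [Function.comp_apply, Fin.castSucc_zero, ← hgaps] at hinit
    rw [Fin.sum_univ_castSucc]
    omega

lemma eq_of_gaps_eq {r : ℕ} {a b : Fin (r + 1) → ℕ} (ha : StrictMono a) (hb : StrictMono b)
    (h₀ : a 0 = b 0) (h : gaps a = gaps b) : a = b := by
  funext k
  induction k using Fin.induction with
  | zero => exact h₀
  | succ k ih => rw [succ_eq_add_gaps ha, succ_eq_add_gaps hb, ih, h]

lemma sum_piAntidiag_prod_choose {ι : Type*} [DecidableEq ι] (s : Finset ι) (g : ι → ℕ)
    (t : ℕ) :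
    ∑ h ∈ piAntidiag s t, ∏ i ∈ s, (g i).choose (h i) = (∑ i ∈ s, g i).choose t := by
  induction s using Finset.cons_induction generalizing t with
  | empty => cases t <;> simp
  | cons a s has ih =>
    rw [piAntidiag_cons, sum_disjiUnion, sum_cons, Nat.add_choose_eq]
    refine sum_congr rfl fun ij _ => ?_
    rw [sum_map, ← ih, mul_sum]
    refine sum_congr rfl fun h hh => ?_
    have ha : h a = 0 := by
      by_contra hne
      exact has ((mem_piAntidiag.mp hh).2 a hne)
    rw [prod_cons]
    simp only [addRightEmbedding_apply, Pi.add_apply, if_true, ha, zero_add]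
    congr 1
    refine prod_congr rfl fun i hi => ?_
    rw [if_neg (ne_of_mem_of_not_mem hi has), add_zero]

section ExtSeq

variable {N ℓ : ℕ}

@[simp] lemma extSeq_zero (f : Fin ℓ → ℕ) : extSeq N ℓ f 0 = 0 := by
  simp [extSeq]

@[simp] lemma extSeq_last (f : Fin ℓ → ℕ) : extSeq N ℓ f (Fin.last (ℓ + 1)) = N + 1 := by
  simp [extSeq]

@[simp] lemma extSeq_succ_castSucc (f : Fin ℓ → ℕ) (j : Fin ℓ) :
    extSeq N ℓ f j.succ.castSucc = f j := by
  have := j.isLt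
  rw [extSeq, dif_neg (by simp), dif_neg (by simp; omega)]
  rfl

lemma extSeq_strictMono {β : Fin ℓ → Fin N} (hβ : StrictMono β) :
    StrictMono (extSeq N ℓ fun i => (β i : ℕ) + 1) := by
  refine Fin.strictMono_iff_lt_succ.mpr fun k => ?_
  have hk := k.isLt
  simp only [extSeq, Fin.val_castSucc, Fin.val_succ]
  split_ifs <;>
    first | omega | contradiction | exact Nat.succ_lt_succ (hβ (Fin.mk_lt_mk.mpr (by omega)))

def tupleGaps (β : Fin ℓ → Fin N) : Fin (ℓ + 1) → ℕ :=
  gaps (extSeq N ℓ fun i => (β i : ℕ) + 1)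

lemma sum_tupleGaps {β : Fin ℓ → Fin N} (hβ : StrictMono β) : ∑ k, tupleGaps β k = N - ℓ := by
  have := sum_gaps_add (extSeq_strictMono hβ)
  simp only [extSeq_zero, extSeq_last] at this
  unfold tupleGaps
  omega

lemma tupleGaps_injective {β β' : Fin ℓ → Fin N} (hβ : StrictMono β) (hβ' : StrictMono β')
    (h : tupleGaps β = tupleGaps β') : β = β' := by
  have hext := eq_of_gaps_eq (extSeq_strictMono hβ) (extSeq_strictMono hβ')
    (by simp only [extSeq_zero]) h
  funext j
  have := congrFun hext j.succ.castSucc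
  simp only [extSeq_succ_castSucc, add_left_inj] at this
  exact Fin.ext this

lemma gapCoeff_eq_prod_choose (β : Fin ℓ → Fin N) {m : ℕ} (γ : Fin ℓ → Fin m) :
    gapCoeff N m ℓ β γ = ∏ k, (tupleGaps β k).choose (tupleGaps γ k) := rfl

end ExtSeq

def increasingTuples (ℓ N : ℕ) : Finset (Fin ℓ → Fin N) :=
  univ.filter fun β => ∀ i j : Fin ℓ, i < j → β i < β j

lemma mem_increasingTuples {ℓ N : ℕ} {β : Fin ℓ → Fin N} :
    β ∈ increasingTuples ℓ N ↔ StrictMono β := by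
  simp [increasingTuples, StrictMono]

lemma eq_of_image_univ_eq {ℓ N : ℕ} {β β' : Fin ℓ → Fin N} (hβ : StrictMono β)
    (hβ' : StrictMono β') (h : univ.image β = univ.image β') : β = β' := by
  have := congrArg (fun s : Finset (Fin N) => (s : Set (Fin N))) h
  simp only [coe_image, coe_univ, Set.image_univ] at this
  exact (hβ.range_inj hβ').mp this

lemma card_increasingTuples_le (ℓ N : ℕ) : #(increasingTuples ℓ N) ≤ N.choose ℓ := by
  classical
  calc #(increasingTuples ℓ N) ≤ #(powersetCard ℓ (univ : Finset (Fin N))) := by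
        refine card_le_card_of_injOn (fun β => univ.image β) (fun β hβ => ?_)
          fun β hβ β' hβ' h => ?_
        · rw [mem_coe, mem_increasingTuples] at hβ
          simp [mem_powersetCard, card_image_of_injective _ hβ.injective]
        · rw [mem_coe, mem_increasingTuples] at hβ hβ'
          exact eq_of_image_univ_eq hβ hβ' h
    _ = N.choose ℓ := by simp

lemma exists_notMem_range_of_ne {ℓ N : ℕ} {β β' : Fin ℓ → Fin N} (hβ : StrictMono β)
    (hβ' : StrictMono β') (hne : β ≠ β') : ∃ k, β k ∉ Set.range β' := by
  classical
  by_contra! hsub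
  refine hne (eq_of_image_univ_eq hβ hβ' (eq_of_subset_of_card_le (fun i hi => ?_) ?_))
  · obtain ⟨k, -, rfl⟩ := mem_image.mp hi
    obtain ⟨k', hk'⟩ := hsub k
    exact mem_image.mpr ⟨k', mem_univ _, hk'⟩
  · rw [card_image_of_injective _ hβ.injective, card_image_of_injective _ hβ'.injective]

lemma sum_gapCoeff_le {n m ℓ : ℕ} {β : Fin ℓ → Fin n} (hβ : StrictMono β) :
    ∑ γ ∈ increasingTuples ℓ m, gapCoeff n m ℓ β γ ≤ (n - ℓ).choose (m - ℓ) := by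
  classical
  calc ∑ γ ∈ increasingTuples ℓ m, gapCoeff n m ℓ β γ
      = ∑ h ∈ (increasingTuples ℓ m).image tupleGaps, ∏ k, (tupleGaps β k).choose (h k) := by
        rw [sum_image fun γ hγ γ' hγ' => tupleGaps_injective (mem_increasingTuples.mp hγ)
          (mem_increasingTuples.mp hγ')]
        exact sum_congr rfl fun γ _ => gapCoeff_eq_prod_choose β γ
    _ ≤ ∑ h ∈ piAntidiag univ (m - ℓ), ∏ k, (tupleGaps β k).choose (h k) := by
        refine sum_le_sum_of_subset fun h hh => ?_
        obtain ⟨γ, hγ, rfl⟩ := mem_image.mp hh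
        simp [sum_tupleGaps (mem_increasingTuples.mp hγ)]
    _ = (n - ℓ).choose (m - ℓ) := by rw [sum_piAntidiag_prod_choose, sum_tupleGaps hβ]

lemma sum_sum_mul_mul_le_sq_mul {ι : Type*} (s : Finset ι) (a : ι → ℝ) (ha : ∀ i ∈ s, 0 ≤ a i)
    (x : ι → ι → ℝ) {M : ℝ} (hx : ∀ i ∈ s, ∀ j ∈ s, x i j ≤ M) :
    ∑ i ∈ s, ∑ j ∈ s, a i * a j * x i j ≤ (∑ i ∈ s, a i) ^ 2 * M := by
  calc ∑ i ∈ s, ∑ j ∈ s, a i * a j * x i j ≤ ∑ i ∈ s, ∑ j ∈ s, a i * a j * M :=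
        sum_le_sum fun i hi => sum_le_sum fun j hj =>
          mul_le_mul_of_nonneg_left (hx i hi j hj) (mul_nonneg (ha i hi) (ha j hj))
    _ = (∑ i ∈ s, a i) ^ 2 * M := by
        simp_rw [sq, sum_mul_sum, sum_mul]

lemma prod_comp_eq_prod_fiberwise {J A ι : Type*} [DecidableEq J] [Fintype ι] {β : ι → J}
    {S : Finset J} (hS : ∀ k, β k ∈ S) (u : ι → A → ℝ) (x : J → A) :
    ∏ k, u k (x (β k)) = ∏ i ∈ S, ∏ k with β k = i, u k (x i) := by
  rw [← prod_fiberwise_of_maps_to (fun k _ => hS k)]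
  exact prod_congr rfl fun i _ => prod_congr rfl fun k hk => by rw [(mem_filter.mp hk).2]

section Integration

variable {Ω : Type*} [MeasurableSpace Ω] {μ : Measure Ω}

lemma integral_sum_mul_sum {ι κ : Type*} (s : Finset ι) (t : Finset κ) (f : ι → Ω → ℝ)
    (g : κ → Ω → ℝ) (hint : ∀ i ∈ s, ∀ j ∈ t, Integrable (fun ω => f i ω * g j ω) μ) :
    ∫ ω, (∑ i ∈ s, f i ω) * (∑ j ∈ t, g j ω) ∂μ = ∑ i ∈ s, ∑ j ∈ t, ∫ ω, f i ω * g j ω ∂μ := by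
  simp_rw [sum_mul_sum]
  rw [integral_finsetSum _ fun i hi => integrable_finsetSum _ (hint i hi)]
  exact sum_congr rfl fun i hi => integral_finsetSum _ (hint i hi)

lemma integral_sq_sum_of_orthogonal {ι : Type*} (s : Finset ι) (f : ι → Ω → ℝ)
    (hint : ∀ i ∈ s, ∀ j ∈ s, Integrable (fun ω => f i ω * f j ω) μ)
    (horth : ∀ i ∈ s, ∀ j ∈ s, i ≠ j → ∫ ω, f i ω * f j ω ∂μ = 0) :
    ∫ ω, (∑ i ∈ s, f i ω) ^ 2 ∂μ = ∑ i ∈ s, ∫ ω, f i ω ^ 2 ∂μ := by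
  simp_rw [sq]
  rw [integral_sum_mul_sum s s f f hint]
  exact sum_congr rfl fun i hi => sum_eq_single_of_mem i hi fun j hj hji => horth i hi j hj hji.symm

lemma integrable_comp_of_finite [IsFiniteMeasure μ] {E : Type*} [MeasurableSpace E] [Finite E]
    [MeasurableSingletonClass E] {X : Ω → E} (hX : Measurable X) (g : E → ℝ) :
    Integrable (fun ω => g (X ω)) μ :=
  Integrable.of_finite.comp_measurable hX

variable {J A : Type*} [MeasurableSpace A] [Finite A] [MeasurableSingletonClass A]
  {ξ : J → Ω → A}

lemma integral_prod_comp_of_injective (hindep : iIndepFun ξ μ) (hmeas : ∀ j, Measurable (ξ j))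
    {ι : Type*} [Fintype ι] {β : ι → J} (hβ : Function.Injective β) (f : ι → A → ℝ) :
    ∫ ω, ∏ k, f k (ξ (β k) ω) ∂μ = ∏ k, ∫ ω, f k (ξ (β k) ω) ∂μ :=
  (hindep.precomp hβ).integral_fun_prod_comp (fun _ => (hmeas _).aemeasurable)
    fun k => (measurable_of_finite (f k)).aestronglyMeasurable

lemma integral_finset_prod_comp (hindep : iIndepFun ξ μ) (hmeas : ∀ j, Measurable (ξ j))
    (S : Finset J) (f : J → A → ℝ) :
    ∫ ω, ∏ i ∈ S, f i (ξ i ω) ∂μ = ∏ i ∈ S, ∫ ω, f i (ξ i ω) ∂μ := by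
  simp_rw [← S.prod_coe_sort]
  exact integral_prod_comp_of_injective hindep hmeas Subtype.val_injective fun i : S => f i

lemma integral_prod_mul_prod_eq_zero (hindep : iIndepFun ξ μ) (hmeas : ∀ j, Measurable (ξ j))
    [DecidableEq J] {ι κ : Type*} [Fintype ι] [Fintype κ] {β : ι → J} {β' : κ → J}
    (hβ : Function.Injective β) (u : ι → A → ℝ) (v : κ → A → ℝ) {k₀ : ι}
    (hk₀ : β k₀ ∉ Set.range β') (hu : ∫ ω, u k₀ (ξ (β k₀) ω) ∂μ = 0) :
    ∫ ω, (∏ k, u k (ξ (β k) ω)) * ∏ k, v k (ξ (β' k) ω) ∂μ = 0 := by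
  set S := univ.image β ∪ univ.image β'
  set F : J → A → ℝ := fun i x => (∏ k with β k = i, u k x) * ∏ k with β' k = i, v k x
  have hfiber : ∀ ω, (∏ k, u k (ξ (β k) ω)) * ∏ k, v k (ξ (β' k) ω) = ∏ i ∈ S, F i (ξ i ω) := by
    intro ω
    rw [prod_comp_eq_prod_fiberwise (S := S) (by simp [S]) u (ξ · ω),
      prod_comp_eq_prod_fiberwise (S := S) (by simp [S]) v (ξ · ω), ← prod_mul_distrib]
  rw [integral_congr_ae (ae_of_all _ hfiber), integral_finset_prod_comp hindep hmeas S F]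
  refine prod_eq_zero (i := β k₀) (by simp [S]) ?_
  have hu_fiber : univ.filter (fun k => β k = β k₀) = {k₀} := by
    ext k; simp [hβ.eq_iff]
  have hv_fiber : univ.filter (fun k => β' k = β k₀) = ∅ := by
    ext k; simpa using fun h => hk₀ ⟨k, h⟩
  simpa only [F, hu_fiber, hv_fiber, prod_singleton, prod_empty, mul_one] using hu

end Integration

section Phi

variable {A : Type*} [Fintype A] [DecidableEq A] {p : A → ℝ}

lemma sum_phi_mul (hp : ∀ a, p a ≠ 0) (hsum : ∑ a, p a = 1) (a : A) :
    ∑ x, phi p a x * p x = 0 := by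
  simp [phi, sub_mul, sum_sub_distrib, hsum, hp a]

lemma sum_phi_mul_phi_mul (hp : ∀ a, p a ≠ 0) (hsum : ∑ a, p a = 1) (a b : A) :
    ∑ x, phi p a x * phi p b x * p x = phi p a b := by
  have hexpand : ∀ x, phi p a x * phi p b x * p x
      = (p b)⁻¹ * (if x = b then phi p a x * p x else 0) - phi p a x * p x := by
    intro x
    by_cases hx : x = b <;> simp [phi, hx] <;> ring
  rw [sum_congr rfl fun x _ => hexpand x, sum_sub_distrib, sum_phi_mul hp hsum, ← mul_sum,
    sum_ite_eq' univ b, if_pos (mem_univ b), sub_zero,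
    mul_comm (phi p a b), inv_mul_cancel_left₀ (hp b)]

lemma abs_phi_le [Nonempty A] (hp : ∀ a, 0 < p a) (hsum : ∑ a, p a = 1) (a b : A) :
    |phi p a b| ≤ (univ.inf' univ_nonempty p)⁻¹ - 1 := by
  set q := univ.inf' univ_nonempty p
  have hq_le : ∀ c, q ≤ p c := fun c => inf'_le p (mem_univ c)
  have hq_pos : 0 < q := (lt_inf'_iff _).mpr fun c _ => hp c
  have hp_le : ∀ c, p c ≤ 1 := fun c =>
    hsum ▸ single_le_sum (fun x _ => (hp x).le) (mem_univ c)
  by_cases hba : b = a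
  · subst hba
    have h1 : 1 ≤ (p b)⁻¹ := one_le_inv₀ (hp b) |>.mpr (hp_le b)
    have h2 : (p b)⁻¹ ≤ q⁻¹ := inv_anti₀ hq_pos (hq_le b)
    rw [phi, if_pos rfl, mul_one, abs_of_nonneg (by linarith)]
    linarith
  · have hpair : p a + p b ≤ 1 := by
      rw [← hsum, ← sum_pair (Ne.symm hba)]
      exact sum_le_sum_of_subset_of_nonneg (subset_univ _) fun x _ _ => (hp x).le
    have h2 : 2 ≤ q⁻¹ := by
      rw [le_inv_comm₀ two_pos hq_pos]
      linarith [hq_le a, hq_le b]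
    rw [phi, if_neg hba, mul_zero, zero_sub, abs_neg, abs_one]
    linarith

lemma inv_inf'_sub_one_nonneg [Nonempty A] (hp : ∀ a, 0 < p a) (hsum : ∑ a, p a = 1) :
    0 ≤ (univ.inf' univ_nonempty p)⁻¹ - 1 :=
  (abs_nonneg _).trans (abs_phi_le hp hsum (Classical.arbitrary A) (Classical.arbitrary A))

end Phi

section Distribution

variable {Ω A : Type*} [MeasurableSpace Ω] {μ : Measure Ω} [IsFiniteMeasure μ]
  [MeasurableSpace A] [Fintype A] [MeasurableSingletonClass A] {p : A → ℝ}

lemma integral_comp_eq_sum_mul (hp : ∀ a, 0 ≤ p a) {X : Ω → A} (hX : Measurable X)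
    (hdist : ∀ a, μ {ω | X ω = a} = ENNReal.ofReal (p a)) (f : A → ℝ) :
    ∫ ω, f (X ω) ∂μ = ∑ a, f a * p a := by
  rw [← integral_map hX.aemeasurable (measurable_of_finite f).aestronglyMeasurable,
    integral_fintype Integrable.of_finite]
  refine sum_congr rfl fun a _ => ?_
  have hfiber : X ⁻¹' {a} = {ω | X ω = a} := rfl
  rw [measureReal_def, Measure.map_apply hX (measurableSet_singleton a), hfiber, hdist,
    ENNReal.toReal_ofReal (hp a), smul_eq_mul, mul_comm]

end Distribution

section Vell

variable {A Ω : Type*} [DecidableEq A] {p : A → ℝ} {ξ : ℕ → Ω → A} {n m ℓ : ℕ} (w : Fin m → A)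

def phiProd (p : A → ℝ) (ξ : ℕ → Ω → A) (β : Fin ℓ → Fin n) (γ : Fin ℓ → Fin m) (ω : Ω) : ℝ :=
  ∏ k, phi p (w (γ k)) (ξ (β k : ℕ) ω)

def Vblock (p : A → ℝ) (ξ : ℕ → Ω → A) (β : Fin ℓ → Fin n) (ω : Ω) : ℝ :=
  ∑ γ ∈ increasingTuples ℓ m, (gapCoeff n m ℓ β γ : ℝ) * phiProd w p ξ β γ ω

lemma Vell_eq_sum_Vblock (ω : Ω) :
    Vell p n m w ξ ℓ ω = ∑ β ∈ increasingTuples ℓ n, Vblock w p ξ β ω := rfl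

variable [Fintype A] [MeasurableSpace A] [MeasurableSingletonClass A] [MeasurableSpace Ω]
  {μ : Measure Ω} [IsProbabilityMeasure μ]

lemma integrable_phiProd_mul (hmeas : ∀ i, Measurable (ξ i)) (a b : ℝ) (β β' : Fin ℓ → Fin n)
    (γ γ' : Fin ℓ → Fin m) :
    Integrable (fun ω => a * phiProd w p ξ β γ ω * (b * phiProd w p ξ β' γ' ω)) μ :=
  integrable_comp_of_finite (X := fun ω => ((fun k => ξ (β k) ω), fun k => ξ (β' k) ω))
    (by fun_prop) fun x =>
      a * (∏ k, phi p (w (γ k)) (x.1 k)) * (b * ∏ k, phi p (w (γ' k)) (x.2 k))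

lemma integrable_Vblock_mul (hmeas : ∀ i, Measurable (ξ i)) (β β' : Fin ℓ → Fin n) :
    Integrable (fun ω => Vblock w p ξ β ω * Vblock w p ξ β' ω) μ :=
  integrable_comp_of_finite (X := fun ω => ((fun k => ξ (β k) ω), fun k => ξ (β' k) ω))
    (by fun_prop) fun x =>
      (∑ γ ∈ increasingTuples ℓ m, (gapCoeff n m ℓ β γ : ℝ) * ∏ k, phi p (w (γ k)) (x.1 k)) *
        ∑ γ ∈ increasingTuples ℓ m, (gapCoeff n m ℓ β' γ : ℝ) * ∏ k, phi p (w (γ k)) (x.2 k)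

lemma integral_Vblock_mul (hmeas : ∀ i, Measurable (ξ i)) (β β' : Fin ℓ → Fin n) :
    ∫ ω, Vblock w p ξ β ω * Vblock w p ξ β' ω ∂μ =
      ∑ γ ∈ increasingTuples ℓ m, ∑ γ' ∈ increasingTuples ℓ m,
        (gapCoeff n m ℓ β γ : ℝ) * gapCoeff n m ℓ β' γ' *
          ∫ ω, phiProd w p ξ β γ ω * phiProd w p ξ β' γ' ω ∂μ := by
  unfold Vblock
  rw [integral_sum_mul_sum _ _ _ _ fun γ _ γ' _ =>
    integrable_phiProd_mul w hmeas _ _ β β' γ γ']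
  refine sum_congr rfl fun γ _ => sum_congr rfl fun γ' _ => ?_
  simp_rw [mul_mul_mul_comm _ (phiProd w p ξ β γ _)]
  exact integral_const_mul _ _

variable (hp : ∀ a, 0 < p a) (hsum : ∑ a, p a = 1) (hmeas : ∀ i, Measurable (ξ i))
  (hindep : iIndepFun ξ μ) (hdist : ∀ i a, μ {ω | ξ i ω = a} = ENNReal.ofReal (p a))
include hp hsum hmeas hindep hdist

lemma integral_phiProd_mul_of_ne {β β' : Fin ℓ → Fin n} (hβ : StrictMono β)
    (hβ' : StrictMono β') (hne : β ≠ β') (γ γ' : Fin ℓ → Fin m) :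
    ∫ ω, phiProd w p ξ β γ ω * phiProd w p ξ β' γ' ω ∂μ = 0 := by
  obtain ⟨k₀, hk₀⟩ := exists_notMem_range_of_ne hβ hβ' hne
  refine integral_prod_mul_prod_eq_zero hindep hmeas (β := fun k => (β k : ℕ))
    (Fin.val_injective.comp hβ.injective) _ _ (k₀ := k₀)
    (fun ⟨k, hk⟩ => hk₀ ⟨k, Fin.ext hk⟩) ?_
  rw [integral_comp_eq_sum_mul (fun a => (hp a).le) (hmeas _) (hdist _),
    sum_phi_mul (fun a => (hp a).ne') hsum]

lemma integral_phiProd_mul_self {β : Fin ℓ → Fin n} (hβ : StrictMono β) (γ γ' : Fin ℓ → Fin m) :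
    ∫ ω, phiProd w p ξ β γ ω * phiProd w p ξ β γ' ω ∂μ = ∏ k, phi p (w (γ k)) (w (γ' k)) := by
  simp_rw [phiProd, ← prod_mul_distrib]
  rw [integral_prod_comp_of_injective hindep hmeas (β := fun k => (β k : ℕ))
    (Fin.val_injective.comp hβ.injective) fun k x => phi p (w (γ k)) x * phi p (w (γ' k)) x]
  refine prod_congr rfl fun k _ => ?_
  rw [integral_comp_eq_sum_mul (fun a => (hp a).le) (hmeas _) (hdist _)
      fun x => phi p (w (γ k)) x * phi p (w (γ' k)) x,
    sum_phi_mul_phi_mul (fun a => (hp a).ne') hsum]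

lemma integral_Vblock_mul_of_ne {β β' : Fin ℓ → Fin n} (hβ : StrictMono β)
    (hβ' : StrictMono β') (hne : β ≠ β') :
    ∫ ω, Vblock w p ξ β ω * Vblock w p ξ β' ω ∂μ = 0 := by
  simp [integral_Vblock_mul w hmeas,
    integral_phiProd_mul_of_ne w hp hsum hmeas hindep hdist hβ hβ' hne]

lemma integral_Vblock_sq_le [Nonempty A] {β : Fin ℓ → Fin n} (hβ : StrictMono β) :
    ∫ ω, Vblock w p ξ β ω ^ 2 ∂μ ≤
      ((univ.inf' univ_nonempty p)⁻¹ - 1) ^ ℓ * ((n - ℓ).choose (m - ℓ) : ℝ) ^ 2 := by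
  set B := (univ.inf' univ_nonempty p)⁻¹ - 1
  have hB : 0 ≤ B := inv_inf'_sub_one_nonneg hp hsum
  have hprod : ∀ γ γ' : Fin ℓ → Fin m, ∏ k, phi p (w (γ k)) (w (γ' k)) ≤ B ^ ℓ := by
    intro γ γ'
    calc ∏ k, phi p (w (γ k)) (w (γ' k)) ≤ ∏ k, |phi p (w (γ k)) (w (γ' k))| := by
          rw [← abs_prod]; exact le_abs_self _
      _ ≤ ∏ _k : Fin ℓ, B :=
          prod_le_prod (fun _ _ => abs_nonneg _) fun _ _ => abs_phi_le hp hsum _ _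
      _ = B ^ ℓ := by simp
  calc ∫ ω, Vblock w p ξ β ω ^ 2 ∂μ
      = ∑ γ ∈ increasingTuples ℓ m, ∑ γ' ∈ increasingTuples ℓ m,
          (gapCoeff n m ℓ β γ : ℝ) * gapCoeff n m ℓ β γ' * ∏ k, phi p (w (γ k)) (w (γ' k)) := by
        simp_rw [sq, integral_Vblock_mul w hmeas,
          integral_phiProd_mul_self w hp hsum hmeas hindep hdist hβ]
    _ ≤ (∑ γ ∈ increasingTuples ℓ m, (gapCoeff n m ℓ β γ : ℝ)) ^ 2 * B ^ ℓ :=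
        sum_sum_mul_mul_le_sq_mul _ _ (fun _ _ => Nat.cast_nonneg _) _ fun γ _ γ' _ => hprod γ γ'
    _ ≤ ((n - ℓ).choose (m - ℓ) : ℝ) ^ 2 * B ^ ℓ := by
        gcongr
        exact_mod_cast sum_gapCoeff_le (m := m) hβ
    _ = B ^ ℓ * ((n - ℓ).choose (m - ℓ) : ℝ) ^ 2 := mul_comm _ _

end Vell

theorem Vell_variance_upper_bound_general {A : Type*} [Fintype A] [DecidableEq A] [Nonempty A]
    [MeasurableSpace A] [MeasurableSingletonClass A]
    (p : A → ℝ) (hp : ∀ a, 0 < p a) (hsum : ∑ a, p a = 1)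
    {Ω : Type*} [MeasurableSpace Ω] (μ : Measure Ω) [IsProbabilityMeasure μ]
    (ξ : ℕ → Ω → A) (hmeas : ∀ i, Measurable (ξ i))
    (hindep : iIndepFun ξ μ)
    (hdist : ∀ i a, μ {ω | ξ i ω = a} = ENNReal.ofReal (p a))
    (n m ℓ : ℕ) (w : Fin m → A) :
    ∫ ω, (Vell p n m w ξ ℓ ω) ^ 2 ∂μ
      ≤ ((Finset.univ.inf' Finset.univ_nonempty p)⁻¹ - 1) ^ ℓ
          * (n.choose ℓ : ℝ) * ((n - ℓ).choose (m - ℓ) : ℝ) ^ 2 := by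
  set C := ((univ.inf' univ_nonempty p)⁻¹ - 1) ^ ℓ * ((n - ℓ).choose (m - ℓ) : ℝ) ^ 2
  have hC : 0 ≤ C := mul_nonneg (pow_nonneg (inv_inf'_sub_one_nonneg hp hsum) ℓ) (sq_nonneg _)
  simp_rw [Vell_eq_sum_Vblock]
  calc ∫ ω, (∑ β ∈ increasingTuples ℓ n, Vblock w p ξ β ω) ^ 2 ∂μ
      = ∑ β ∈ increasingTuples ℓ n, ∫ ω, Vblock w p ξ β ω ^ 2 ∂μ :=
        integral_sq_sum_of_orthogonal _ _ (fun β _ β' _ => integrable_Vblock_mul w hmeas β β')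
          fun β hβ β' hβ' hne => integral_Vblock_mul_of_ne w hp hsum hmeas hindep hdist
            (mem_increasingTuples.mp hβ) (mem_increasingTuples.mp hβ') hne
    _ ≤ ∑ _β ∈ increasingTuples ℓ n, C := sum_le_sum fun β hβ =>
        integral_Vblock_sq_le w hp hsum hmeas hindep hdist (mem_increasingTuples.mp hβ)
    _ ≤ n.choose ℓ * C := by
        rw [sum_const, nsmul_eq_mul]
        gcongr
        exact_mod_cast card_increasingTuples_le ℓ n
    _ = _ := by ring

/-- Lemma 3.2: `σ_ℓ² := E[V_ℓ²] ≤ B^ℓ C(n,ℓ) C(n-ℓ,m-ℓ)²`,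
where `B = (min_a p_a)⁻¹ - 1`. -/
theorem Vell_variance_upper_bound {A : Type*} [Fintype A] [DecidableEq A] [Nonempty A]
    [MeasurableSpace A] [MeasurableSingletonClass A]
    (p : A → ℝ) (hp : ∀ a, 0 < p a) (hsum : ∑ a, p a = 1)
    {Ω : Type*} [MeasurableSpace Ω] (μ : Measure Ω) [IsProbabilityMeasure μ]
    (ξ : ℕ → Ω → A) (hmeas : ∀ i, Measurable (ξ i))
    (hindep : iIndepFun ξ μ)
    (hdist : ∀ i a, μ {ω | ξ i ω = a} = ENNReal.ofReal (p a))
    (n m ℓ : ℕ) (w : Fin m → A) (hmn : m ≤ n) (hl1 : 1 ≤ ℓ) (hlm : ℓ ≤ m) :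
    ∫ ω, (Vell p n m w ξ ℓ ω) ^ 2 ∂μ
      ≤ ((Finset.univ.inf' Finset.univ_nonempty p)⁻¹ - 1) ^ ℓ
          * (n.choose ℓ : ℝ) * ((n - ℓ).choose (m - ℓ) : ℝ) ^ 2 :=
  Vell_variance_upper_bound_general p hp hsum μ ξ hmeas hindep hdist n m ℓ w
end
end

section
/- Let w be a word of length m ≤ n and let q = (q_a)_{a∈𝒜} with q_a := (1/m) Σ_{j=1}^m 1{w_j = a} be the letter proportions of w. Then σ_1² ≥ (m²/n) C(n,m)² ‖q − p‖² = n C(n−1, m−1)² ‖q − p‖², where ‖q − p‖² = Σ_{a∈𝒜} (q_a − p_a)². -/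
noncomputable section

/-- Hockey stick: `∑_{s < M} C(s,k) = C(M, k+1)`. -/
lemma aux_sum_range_choose (M k : ℕ) :
    ∑ s ∈ Finset.range M, s.choose k = M.choose (k + 1) := by
  induction M with
  | zero => simp
  | succ M ih =>
    rw [Finset.sum_range_succ, ih, Nat.choose_succ_succ' (M) (k)]
    omega

/-- Convolution identity: `∑_{i ≤ N} C(i,j) C(N-i,k) = C(N+1, j+k+1)`. -/
lemma aux_key (N : ℕ) : ∀ j k : ℕ,
    ∑ i ∈ Finset.range (N + 1), i.choose j * (N - i).choose k
      = (N + 1).choose (j + k + 1) := by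
  induction N with
  | zero => intro j k; cases j <;> cases k <;> simp [Nat.choose]
  | succ N ih =>
    intro j k
    cases j with
    | zero =>
      simp only [Nat.choose_zero_right, one_mul, zero_add]
      have h : ∑ x ∈ Finset.range (N + 2), (N + 1 - x).choose k
          = ∑ x ∈ Finset.range (N + 2), x.choose k := by
        rw [← Finset.sum_range_reflect (fun i => i.choose k) (N + 2)]
        refine Finset.sum_congr rfl fun x hx => ?_
        congr 1
      rw [h, aux_sum_range_choose]
    | succ j =>
      rw [Finset.sum_range_succ' (fun i => i.choose (j + 1) * (N + 1 - i).choose k)]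
      simp only [Nat.choose_succ_succ, Nat.choose_zero_succ, zero_mul, add_zero,
        Nat.succ_sub_succ_eq_sub, add_mul]
      rw [Finset.sum_add_distrib, ih j k, ih (j + 1) k]
      simp only [Nat.succ_eq_add_one]
      have e : j + 1 + k = j + k + 1 := by omega
      have pas := Nat.choose_succ_succ N (j + k + 1)
      simp only [Nat.succ_eq_add_one] at pas
      rw [e, pas]

/-- Column sum: for `j < m ≤ n`, `∑_{i < n} C(i,j) C(n-1-i, m-1-j) = C(n,m)`. -/
lemma aux_colsum (n m j : ℕ) (hj : j < m) (hmn : m ≤ n) :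
    ∑ i ∈ Finset.range n, i.choose j * (n - 1 - i).choose (m - 1 - j) = n.choose m := by
  obtain ⟨N, rfl⟩ : ∃ N, n = N + 1 := ⟨n - 1, by omega⟩
  have h : ∀ i ∈ Finset.range (N + 1),
      i.choose j * (N + 1 - 1 - i).choose (m - 1 - j)
        = i.choose j * (N - i).choose (m - 1 - j) := by
    intro i _; congr 2 <;> omega
  rw [Finset.sum_congr rfl h, aux_key N j (m - 1 - j)]
  congr 1
  omega

/-- Row (Vandermonde) sum: for `i < n`, `1 ≤ m ≤ n`,
`∑_{j < m} C(i,j) C(n-1-i, m-1-j) = C(n-1, m-1)`. -/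
lemma aux_rowsum (n m i : ℕ) (hi : i < n) (hm : 1 ≤ m) (hmn : m ≤ n) :
    ∑ j ∈ Finset.range m, i.choose j * (n - 1 - i).choose (m - 1 - j)
      = (n - 1).choose (m - 1) := by
  have h : i + (n - 1 - i) = n - 1 := by omega
  have hm1 : m - 1 + 1 = m := by omega
  calc ∑ j ∈ Finset.range m, i.choose j * (n - 1 - i).choose (m - 1 - j)
      = ∑ j ∈ Finset.range (m - 1 + 1), i.choose j * (n - 1 - i).choose (m - 1 - j) := by
        rw [hm1]
    _ = (i + (n - 1 - i)).choose (m - 1) := by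
        rw [Nat.add_choose_eq, Finset.Nat.sum_antidiagonal_eq_sum_range_succ_mk]
    _ = (n - 1).choose (m - 1) := by rw [h]

/-- `σ₁²` of the paper (eq. (2.16)): here the text positions `i ∈ {1,…,n}` and word
positions `j ∈ {1,…,m}` are 0-indexed as `i : Fin n`, `j : Fin m`, so that
`C(i-1, j-1)` becomes `C(i, j)` and `C(n-i, m-j)` becomes `C(n-1-i, m-1-j)`. -/
def sigma1Sq {A : Type*} [Fintype A] [DecidableEq A] (p : A → ℝ) (n m : ℕ)
    (w : Fin m → A) : ℝ :=
  (∑ i : Fin n, ∑ a : A, (p a)⁻¹ *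
      (∑ j ∈ Finset.univ.filter (fun j : Fin m => w j = a),
        (((i : ℕ).choose (j : ℕ) * (n - 1 - (i : ℕ)).choose (m - 1 - (j : ℕ)) : ℕ) : ℝ)) ^ 2)
    - n * ((n - 1).choose (m - 1) : ℝ) ^ 2

/-- Lemma 3.8: if `q` is the vector of letter proportions of `w`,
then `σ₁² ≥ (m²/n) C(n,m)² ‖q - p‖² = n C(n-1,m-1)² ‖q - p‖²`. -/
theorem sigma1Sq_lower_bound {A : Type*} [Fintype A] [DecidableEq A]
    (p : A → ℝ) (hp : ∀ a, 0 < p a) (hsum : ∑ a, p a = 1)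
    (n m : ℕ) (w : Fin m → A) (hm : 1 ≤ m) (hmn : m ≤ n)
    (q : A → ℝ) (hq : ∀ a, q a = (∑ j : Fin m, if w j = a then (1 : ℝ) else 0) / m) :
    ((m : ℝ) ^ 2 / n) * (n.choose m : ℝ) ^ 2 * (∑ a, (q a - p a) ^ 2)
        ≤ sigma1Sq p n m w
    ∧ ((m : ℝ) ^ 2 / n) * (n.choose m : ℝ) ^ 2 * (∑ a, (q a - p a) ^ 2)
        = (n : ℝ) * ((n - 1).choose (m - 1) : ℝ) ^ 2 * (∑ a, (q a - p a) ^ 2) := by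
  have hn : 0 < n := lt_of_lt_of_le hm hmn
  have hnR : (0 : ℝ) < n := by exact_mod_cast hn
  have hmR : (0 : ℝ) < m := by exact_mod_cast hm
  set c : ℝ := ((n - 1).choose (m - 1) : ℝ) with hc
  set K : ℝ := (n.choose m : ℝ) with hK
  -- the basic identity n * C(n-1,m-1) = m * C(n,m)
  have hckNat : n * (n - 1).choose (m - 1) = m * n.choose m := by
    have h1 : n - 1 + 1 = n := by omega
    have h2 : m - 1 + 1 = m := by omega
    have := Nat.add_one_mul_choose_eq (n - 1) (m - 1)
    simp only [Nat.succ_eq_add_one, h1, h2] at this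
    rw [this, Nat.mul_comm]
  have hck : (n : ℝ) * c = m * K := by
    rw [hc, hK]; exact_mod_cast hckNat
  set F : Fin n → A → ℝ := fun i a =>
      ∑ j ∈ Finset.univ.filter (fun j : Fin m => w j = a),
        (((i : ℕ).choose (j : ℕ) * (n - 1 - (i : ℕ)).choose (m - 1 - (j : ℕ)) : ℕ) : ℝ) with hF
  -- row sums
  have h1 : ∀ i : Fin n, ∑ a, F i a = c := by
    intro i
    rw [hF]
    rw [Finset.sum_fiberwise Finset.univ (fun j : Fin m => w j)
      (fun j : Fin m =>
        (((i : ℕ).choose (j : ℕ) * (n - 1 - (i : ℕ)).choose (m - 1 - (j : ℕ)) : ℕ) : ℝ))]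
    rw [hc]
    rw [← Nat.cast_sum]
    rw [Fin.sum_univ_eq_sum_range (fun j => (i : ℕ).choose j * (n - 1 - (i : ℕ)).choose (m - 1 - j))]
    exact_mod_cast congrArg (Nat.cast (R := ℝ)) (aux_rowsum n m i i.isLt hm hmn)
  -- column sums
  have h2 : ∀ a, ∑ i : Fin n, F i a = (m : ℝ) * q a * K := by
    intro a
    have hcard : (m : ℝ) * q a
        = ((Finset.univ.filter (fun j : Fin m => w j = a)).card : ℝ) := by
      rw [hq a, Finset.sum_boole]
      field_simp
    rw [hF]
    rw [Finset.sum_comm]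
    have : ∀ j ∈ Finset.univ.filter (fun j : Fin m => w j = a),
        (∑ i : Fin n,
          (((i : ℕ).choose (j : ℕ) * (n - 1 - (i : ℕ)).choose (m - 1 - (j : ℕ)) : ℕ) : ℝ)) = K := by
      intro j _
      rw [← Nat.cast_sum]
      rw [Fin.sum_univ_eq_sum_range
        (fun i => i.choose (j : ℕ) * (n - 1 - i).choose (m - 1 - (j : ℕ)))]
      rw [aux_colsum n m (j : ℕ) j.isLt hmn, hK]
    rw [Finset.sum_congr rfl this, Finset.sum_const, nsmul_eq_mul, hcard]
  -- p a ≤ 1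
  have hple : ∀ a, p a ≤ 1 := by
    intro a
    rw [← hsum]
    exact Finset.single_le_sum (fun b _ => (hp b).le) (Finset.mem_univ a)
  -- pointwise quadratic bound
  have h3 : ∀ i : Fin n,
      ∑ a, (F i a - p a * c) ^ 2 ≤ ∑ a, (p a)⁻¹ * (F i a) ^ 2 - c ^ 2 := by
    intro i
    have key : ∀ a, (F i a - p a * c) ^ 2
        ≤ (p a)⁻¹ * (F i a) ^ 2 - (2 * c * F i a - p a * c ^ 2) := by
      intro a
      have hpa := hp a
      have heq : (p a)⁻¹ * (F i a) ^ 2 - (2 * c * F i a - p a * c ^ 2)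
          = (F i a - p a * c) ^ 2 / p a := by
        field_simp
        ring
      rw [heq, le_div_iff₀ hpa]
      have := sq_nonneg (F i a - p a * c)
      nlinarith [hple a]
    calc ∑ a, (F i a - p a * c) ^ 2
        ≤ ∑ a, ((p a)⁻¹ * (F i a) ^ 2 - (2 * c * F i a - p a * c ^ 2)) :=
          Finset.sum_le_sum fun a _ => key a
      _ = ∑ a, (p a)⁻¹ * (F i a) ^ 2 - c ^ 2 := by
          rw [Finset.sum_sub_distrib, Finset.sum_sub_distrib, ← Finset.mul_sum,
            ← Finset.sum_mul, h1 i, hsum]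
          ring
  -- Cauchy-Schwarz per letter
  have h4 : ∀ a, ((m : ℝ) * K * (q a - p a)) ^ 2 / n ≤ ∑ i : Fin n, (F i a - p a * c) ^ 2 := by
    intro a
    have hsumi : ∑ i : Fin n, (F i a - p a * c) = (m : ℝ) * K * (q a - p a) := by
      rw [Finset.sum_sub_distrib, h2 a, Finset.sum_const, Finset.card_univ, Fintype.card_fin,
        nsmul_eq_mul]
      have : (n : ℝ) * (p a * c) = p a * ((n : ℝ) * c) := by ring
      rw [this, hck]
      ring
    have := sq_sum_le_card_mul_sum_sq (s := (Finset.univ : Finset (Fin n)))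
      (f := fun i => F i a - p a * c)
    rw [hsumi, Finset.card_univ, Fintype.card_fin] at this
    rw [div_le_iff₀ hnR]
    linarith [this]
  -- main inequality
  have hineq : ((m : ℝ) ^ 2 / n) * K ^ 2 * (∑ a, (q a - p a) ^ 2) ≤ sigma1Sq p n m w := by
    have e1 : ((m : ℝ) ^ 2 / n) * K ^ 2 * (∑ a, (q a - p a) ^ 2)
        = ∑ a, ((m : ℝ) * K * (q a - p a)) ^ 2 / n := by
      rw [Finset.mul_sum]
      refine Finset.sum_congr rfl fun a _ => ?_
      field_simp
    rw [e1]
    calc ∑ a, ((m : ℝ) * K * (q a - p a)) ^ 2 / n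
        ≤ ∑ a, ∑ i : Fin n, (F i a - p a * c) ^ 2 := Finset.sum_le_sum fun a _ => h4 a
      _ = ∑ i : Fin n, ∑ a, (F i a - p a * c) ^ 2 := Finset.sum_comm
      _ ≤ ∑ i : Fin n, (∑ a, (p a)⁻¹ * (F i a) ^ 2 - c ^ 2) :=
          Finset.sum_le_sum fun i _ => h3 i
      _ = sigma1Sq p n m w := by
          rw [Finset.sum_sub_distrib, Finset.sum_const, Finset.card_univ, Fintype.card_fin,
            nsmul_eq_mul]
          rfl
  refine ⟨hineq, ?_⟩
  have heq : ((m : ℝ) ^ 2 / n) * K ^ 2 = (n : ℝ) * c ^ 2 := by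
    have h := congrArg (fun x : ℝ => x ^ 2 / n) hck
    simp only [mul_pow] at h
    field_simp at h ⊢
    nlinarith [h]
  rw [← heq]
end
end

section
/- Let 𝒜 = {0,1} with p_0 = p_1 = 1/2, and let w = 0101⋯ be the alternating word of length m (w_j = j mod 2, say). Then for any 1 ≤ m ≤ n/2, σ_1² ≤ 10 (n/m) C(n−1, m−1)². -/
noncomputable section

/-!
Write `Nᵢⱼ = C(i,j) C(n-1-i, m-1-j)` and split `∑ⱼ Nᵢⱼ = Aᵢ + Bᵢ` according to the parity of `j`.
With `p₀ = p₁ = 1/2` the `i`-th summand of `σ₁²` is `2(Aᵢ² + Bᵢ²) = (Aᵢ + Bᵢ)² + (Aᵢ - Bᵢ)²`, and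
`Aᵢ + Bᵢ = C(n-1, m-1)` by Vandermonde, so `σ₁² = ∑ᵢ Dᵢ²` with `Dᵢ = Aᵢ - Bᵢ` the coefficient of
`x^(m-1)` in `(1-x)^i (1+x)^(n-1-i)`. Hence `σ₁²` is the coefficient of `x^(m-1) y^(m-1)` in
`∑ᵢ vⁱ u^(n-1-i) = (uⁿ - vⁿ) / (u - v)`, where `u, v = (1 ± x)(1 ± y) = q ± s` with `q = 1 + xy`,
`s = x + y`. Only odd powers of `s` survive in `uⁿ - vⁿ`, and reading off the coefficient gives
`σ₁² = ∑_{t<m} C(n, 2t+1) C(2t, t) C(n-1-2t, m-1-t)`. Bounding `C(2t,t) ≤ C(2t+1,t)` turns the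
`t`-th term into `C(n,m) C(n-m,t) C(m,t+1)`, so by Vandermonde again
`σ₁² ≤ C(n,m) C(n,m-1) ≤ 2 (n/m) C(n-1,m-1)²` once `2m ≤ n`.
-/

open Polynomial Finset

namespace Polynomial

variable {R : Type*}

theorem coeff_one_add_C_mul_X_pow [CommSemiring R] (r : R) (n k : ℕ) :
    ((1 + C r * X) ^ n).coeff k = r ^ k * (n.choose k : R) := by
  rw [add_comm, add_pow, finsetSum_coeff]
  simp only [one_pow, mul_one, mul_pow, ← C_pow, coeff_mul_natCast, coeff_C_mul, coeff_X_pow]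
  simp +contextual [Nat.choose_eq_zero_of_lt]

theorem coeff_one_sub_X_pow [CommRing R] (n k : ℕ) :
    ((1 - X : R[X]) ^ n).coeff k = (-1) ^ k * (n.choose k : R) := by
  simpa [sub_eq_add_neg] using coeff_one_add_C_mul_X_pow (-1 : R) n k

theorem coeff_one_sub_X_pow_mul_one_add_X_pow [CommRing R] (i k a : ℕ) :
    ((1 - X : R[X]) ^ i * (1 + X) ^ k).coeff a
      = ∑ j ∈ range (a + 1), (-1) ^ j * (i.choose j : R) * (k.choose (a - j) : R) := by
  simp only [coeff_mul, Nat.sum_antidiagonal_eq_sum_range_succ_mk, coeff_one_sub_X_pow,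
    coeff_one_add_X_pow, mul_assoc]

theorem coeff_coeff_C_mul_map_C [Semiring R] (F : R[X]) (a b : ℕ) :
    ((C F * F.map C).coeff a).coeff b = F.coeff b * F.coeff a := by
  rw [coeff_C_mul, coeff_map, coeff_mul_C]

theorem coeff_coeff_one_add_C_X_mul_X_pow_mul_C_X_add_X_pow [CommSemiring R] (k t a : ℕ) :
    (((1 + C X * X : R[X][X]) ^ k * (C X + X) ^ (2 * t)).coeff a).coeff a
      = if t ≤ a then ((2 * t).choose t : R) * (k.choose (a - t) : R) else 0 := by
  rw [coeff_mul, finsetSum_coeff]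
  have hterm : ∀ bc ∈ antidiagonal a, (((1 + C X * X : R[X][X]) ^ k).coeff bc.1 *
      ((C X + X) ^ (2 * t)).coeff bc.2).coeff a
        = if bc = (a - t, t) then ((2 * t).choose t : R) * (k.choose (a - t) : R) else 0 := by
    rintro ⟨b, c⟩ hbc
    rw [HasAntidiagonal.mem_antidiagonal] at hbc
    rw [coeff_one_add_C_mul_X_pow, add_comm (C X) X, coeff_X_add_C_pow,
      show (X : R[X]) ^ b * (k.choose b : R[X]) * (X ^ (2 * t - c) * ((2 * t).choose c : R[X]))
        = C ((k.choose b : R) * ((2 * t).choose c : R)) * X ^ (b + (2 * t - c)) by simp; ring,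
      coeff_C_mul_X_pow]
    by_cases hc : c ≤ 2 * t
    · by_cases h : a = b + (2 * t - c)
      · obtain ⟨rfl, rfl⟩ : b = a - t ∧ c = t := by omega
        rw [if_pos h, if_pos rfl, mul_comm]
      · rw [if_neg h, if_neg (by rw [Prod.mk.injEq]; omega)]
    · simp only [Nat.choose_eq_zero_of_lt (not_le.mp hc), Nat.cast_zero, mul_zero, ite_self]
      rw [if_neg (by rw [Prod.mk.injEq]; omega)]
  rw [sum_congr rfl hterm, sum_ite_eq']
  exact if_congr (by rw [HasAntidiagonal.mem_antidiagonal]; omega) rfl rfl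

end Polynomial

theorem Finset.sum_range_two_mul {M : Type*} [AddCommMonoid M] (f : ℕ → M) (N : ℕ) :
    ∑ k ∈ range (2 * N), f k = ∑ t ∈ range N, (f (2 * t) + f (2 * t + 1)) := by
  induction N with
  | zero => simp
  | succ N ih =>
    rw [mul_add, mul_one, sum_range_succ, sum_range_succ, sum_range_succ, ih, add_assoc]

section

variable {R : Type*} [CommRing R]

theorem add_pow_sub_sub_pow (q s : R) (n : ℕ) :
    (q + s) ^ n - (q - s) ^ n
      = 2 * s * ∑ t ∈ range (n + 1),
          (n.choose (2 * t + 1) : R) * q ^ (n - 1 - 2 * t) * s ^ (2 * t) := by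
  have hodd : ∀ k, (s ^ k - (-s) ^ k) * q ^ (n - k) * (n.choose k : R)
      = if Even k then 0 else 2 * s ^ k * q ^ (n - k) * n.choose k := by
    intro k
    rcases Nat.even_or_odd k with hk | hk
    · rw [if_pos hk, hk.neg_pow, sub_self, zero_mul, zero_mul]
    · rw [if_neg (Nat.not_even_iff_odd.mpr hk), hk.neg_pow]; ring
  calc (q + s) ^ n - (q - s) ^ n
      = ∑ k ∈ range (n + 1), (s ^ k - (-s) ^ k) * q ^ (n - k) * (n.choose k : R) := by
        rw [add_comm q, sub_eq_neg_add q s, add_pow, add_pow, ← sum_sub_distrib]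
        exact sum_congr rfl fun k _ => by ring
    _ = ∑ k ∈ range (2 * (n + 1)), (s ^ k - (-s) ^ k) * q ^ (n - k) * (n.choose k : R) := by
        refine sum_subset (range_subset_range.mpr (by omega)) fun k _ hk => ?_
        rw [Nat.choose_eq_zero_of_lt (by simpa using hk), Nat.cast_zero, mul_zero]
    _ = _ := by
        rw [sum_range_two_mul, mul_sum]
        refine sum_congr rfl fun t _ => ?_
        rw [hodd, hodd, if_pos (even_two_mul t), if_neg (by simp), zero_add, Nat.sub_sub,
          add_comm 1, pow_succ]
        ring

theorem geom_sum₂_sub_add_eq [IsDomain R] {q s : R} (hs : (2 : R) * s ≠ 0) (n : ℕ) :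
    ∑ i ∈ range n, (q - s) ^ i * (q + s) ^ (n - 1 - i)
      = ∑ t ∈ range (n + 1), (n.choose (2 * t + 1) : R) * q ^ (n - 1 - 2 * t) * s ^ (2 * t) := by
  refine mul_left_cancel₀ hs ?_
  rw [← add_pow_sub_sub_pow]
  linear_combination -(geom_sum₂_mul (q - s) (q + s) n)

theorem Polynomial.sum_sq_coeff_one_sub_X_pow_mul_one_add_X_pow [IsDomain R] [CharZero R]
    (n a : ℕ) :
    ∑ i ∈ range n, (((1 - X : R[X]) ^ i * (1 + X) ^ (n - 1 - i)).coeff a) ^ 2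
      = ∑ t ∈ range (a + 1), (n.choose (2 * t + 1) : R) * ((2 * t).choose t : R)
          * ((n - 1 - 2 * t).choose (a - t) : R) := by
  -- In `R[X][X]`, `C X` is `x` and `X` is `y`, so `C F * F.map C` is `F(x) F(y)`.
  set q : R[X][X] := 1 + C X * X
  set s : R[X][X] := C X + X
  have hs : (2 : R[X][X]) * s ≠ 0 := by
    refine mul_ne_zero two_ne_zero fun h => ?_
    simpa [s] using congrArg (coeff · 1) h
  have hprod : ∀ i, C ((1 - X : R[X]) ^ i * (1 + X) ^ (n - 1 - i))
      * ((1 - X : R[X]) ^ i * (1 + X) ^ (n - 1 - i)).map C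
        = (q - s) ^ i * (q + s) ^ (n - 1 - i) := by
    intro i
    rw [show q - s = (1 - C X) * (1 - X) by ring, show q + s = (1 + C X) * (1 + X) by ring]
    simp only [Polynomial.map_mul, Polynomial.map_pow, Polynomial.map_sub, Polynomial.map_add,
      Polynomial.map_one, map_X, map_mul, map_pow, map_sub, map_add, map_one, mul_pow]
    ring
  calc ∑ i ∈ range n, (((1 - X : R[X]) ^ i * (1 + X) ^ (n - 1 - i)).coeff a) ^ 2
      = ((∑ i ∈ range n, (q - s) ^ i * (q + s) ^ (n - 1 - i)).coeff a).coeff a := by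
        simp only [finsetSum_coeff, ← hprod, coeff_coeff_C_mul_map_C, sq]
    _ = ∑ t ∈ range (n + 1), (n.choose (2 * t + 1) : R)
          * if t ≤ a then ((2 * t).choose t : R) * ((n - 1 - 2 * t).choose (a - t) : R) else 0 := by
        simp only [geom_sum₂_sub_add_eq hs, finsetSum_coeff, mul_assoc, coeff_natCast_mul, q, s,
          coeff_coeff_one_add_C_X_mul_X_pow_mul_C_X_add_X_pow]
    _ = ∑ t ∈ range (n + 1 + (a + 1)), (n.choose (2 * t + 1) : R)
          * if t ≤ a then ((2 * t).choose t : R) * ((n - 1 - 2 * t).choose (a - t) : R) else 0 := by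
        refine sum_subset (range_subset_range.mpr (by omega)) fun t _ ht => ?_
        rw [Nat.choose_eq_zero_of_lt (by rw [mem_range] at ht; omega), Nat.cast_zero, zero_mul]
    _ = ∑ t ∈ range (a + 1), (n.choose (2 * t + 1) : R)
          * if t ≤ a then ((2 * t).choose t : R) * ((n - 1 - 2 * t).choose (a - t) : R) else 0 := by
        refine (sum_subset (range_subset_range.mpr (by omega)) fun t _ ht => ?_).symm
        rw [if_neg (by rw [mem_range] at ht; omega), mul_zero]
    _ = _ := sum_congr rfl fun t ht => by
        rw [if_pos (by rw [mem_range] at ht; omega), mul_assoc]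

theorem sum_fin_two_two_mul_sq_sum_filter {ι : Type*} [Fintype ι] (w : ι → Fin 2)
    (f : ι → R) :
    ∑ a : Fin 2, 2 * (∑ j ∈ univ.filter (fun j => w j = a), f j) ^ 2
      = (∑ j, f j) ^ 2 + (∑ j, (-1) ^ (w j : ℕ) * f j) ^ 2 := by
  have hfiber : ∀ a : Fin 2, ∑ j ∈ univ.filter (fun j => w j = a), (-1) ^ (w j : ℕ) * f j
      = (-1) ^ (a : ℕ) * ∑ j ∈ univ.filter (fun j => w j = a), f j := by
    intro a
    rw [mul_sum]
    exact sum_congr rfl fun j hj => by rw [(mem_filter.mp hj).2]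
  rw [← sum_fiberwise univ w f, ← sum_fiberwise univ w, Fin.sum_univ_two, Fin.sum_univ_two,
    Fin.sum_univ_two, hfiber, hfiber]
  simp only [Fin.val_zero, Fin.val_one, pow_zero, pow_one]
  ring

end

theorem sigma1Sq_half_eq {n m : ℕ} (hm : 1 ≤ m) (w : Fin m → Fin 2) :
    sigma1Sq (fun _ : Fin 2 => (1 / 2 : ℝ)) n m w
      = ∑ i : Fin n, (∑ j : Fin m, (-1) ^ (w j : ℕ)
          * (((i : ℕ).choose j * (n - 1 - i).choose (m - 1 - j) : ℕ) : ℝ)) ^ 2 := by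
  have hrow : ∀ i : Fin n,
      ∑ j : Fin m, (((i : ℕ).choose j * (n - 1 - i).choose (m - 1 - j) : ℕ) : ℝ)
        = (n - 1).choose (m - 1) := by
    intro i
    obtain ⟨k, rfl⟩ : ∃ k, m = k + 1 := ⟨m - 1, by omega⟩
    have h := Nat.add_choose_eq i (n - 1 - i) k
    rw [Nat.add_sub_cancel' (by omega), Nat.sum_antidiagonal_eq_sum_range_succ_mk,
      ← Fin.sum_univ_eq_sum_range] at h
    rw [Nat.add_sub_cancel]
    exact_mod_cast h.symm
  simp only [sigma1Sq, one_div, inv_inv, sum_fin_two_two_mul_sq_sum_filter, hrow]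
  rw [sum_add_distrib, sum_const, card_univ, Fintype.card_fin, nsmul_eq_mul, add_sub_cancel_left]

theorem sigma1Sq_alternating_eq {n m : ℕ} (hm : 1 ≤ m) :
    sigma1Sq (fun _ : Fin 2 => (1 / 2 : ℝ)) n m (fun j => ⟨(j : ℕ) % 2, Nat.mod_lt _ two_pos⟩)
      = ∑ i ∈ range n, (((1 - X : ℝ[X]) ^ i * (1 + X) ^ (n - 1 - i)).coeff (m - 1)) ^ 2 := by
  obtain ⟨k, rfl⟩ : ∃ k, m = k + 1 := ⟨m - 1, by omega⟩
  have hsigned : ∀ i : Fin n, ∑ j : Fin (k + 1),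
      (-1 : ℝ) ^ (j % 2 : ℕ) * (((i : ℕ).choose j * (n - 1 - i).choose (k - j) : ℕ) : ℝ)
        = ((1 - X : ℝ[X]) ^ (i : ℕ) * (1 + X) ^ (n - 1 - i)).coeff k := by
    intro i
    simp only [← neg_one_pow_eq_pow_mod_two, Nat.cast_mul, ← mul_assoc]
    rw [Fin.sum_univ_eq_sum_range
        (fun j => (-1 : ℝ) ^ j * ((i : ℕ).choose j : ℝ) * ((n - 1 - i).choose (k - j) : ℝ)),
      coeff_one_sub_X_pow_mul_one_add_X_pow]
  rw [sigma1Sq_half_eq hm]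
  simp only [Nat.add_sub_cancel, hsigned]
  exact Fin.sum_univ_eq_sum_range
    (fun i => (((1 - X : ℝ[X]) ^ i * (1 + X) ^ (n - 1 - i)).coeff k) ^ 2) n

theorem Nat.choose_mul_choose_mul_choose_eq {n m t : ℕ} (ht : t < m) :
    n.choose (2 * t + 1) * (2 * t + 1).choose t * (n - 1 - 2 * t).choose (m - 1 - t)
      = n.choose m * (n - m).choose t * m.choose (t + 1) := by
  have h₁ : n.choose (2 * t + 1) * (2 * t + 1).choose t = n.choose t * (n - t).choose (t + 1) := by
    rw [Nat.choose_mul (by omega), show 2 * t + 1 - t = t + 1 by omega]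
  have h₂ : (n - t).choose m * m.choose (t + 1)
      = (n - t).choose (t + 1) * (n - 1 - 2 * t).choose (m - 1 - t) := by
    rw [Nat.choose_mul (by omega), show n - t - (t + 1) = n - 1 - 2 * t by omega,
      show m - (t + 1) = m - 1 - t by omega]
  have h₃ : n.choose t * (n - t).choose m = n.choose m * (n - m).choose t := by
    have ha := Nat.choose_mul (n := n) (show t ≤ m + t by omega)
    have hb := Nat.choose_mul (n := n) (show m ≤ m + t by omega)
    rw [Nat.add_sub_cancel] at ha
    rw [Nat.add_sub_cancel_left] at hb
    rw [← ha, ← hb, Nat.choose_symm_add]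
  rw [h₁, mul_assoc, ← h₂, ← mul_assoc, h₃, mul_assoc]

theorem Nat.sum_range_choose_mul_choose_succ {n m : ℕ} (hm : 1 ≤ m) (hmn : m ≤ n) :
    ∑ t ∈ range m, (n - m).choose t * m.choose (t + 1) = n.choose (m - 1) := by
  obtain ⟨k, rfl⟩ : ∃ k, m = k + 1 := ⟨m - 1, by omega⟩
  have h := Nat.add_choose_eq (n - (k + 1)) (k + 1) k
  rw [Nat.sub_add_cancel hmn, Nat.sum_antidiagonal_eq_sum_range_succ_mk] at h
  rw [Nat.add_sub_cancel, h]
  refine sum_congr rfl fun t ht => ?_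
  rw [mem_range] at ht
  rw [Nat.choose_symm_of_eq_add (by omega : k + 1 = t + 1 + (k - t))]

theorem Nat.sum_range_choose_mul_central_le {n m : ℕ} (hm : 1 ≤ m) (hmn : m ≤ n) :
    ∑ t ∈ range m, n.choose (2 * t + 1) * (2 * t).choose t * (n - 1 - 2 * t).choose (m - 1 - t)
      ≤ n.choose m * n.choose (m - 1) := by
  calc ∑ t ∈ range m, n.choose (2 * t + 1) * (2 * t).choose t * (n - 1 - 2 * t).choose (m - 1 - t)
      ≤ ∑ t ∈ range m,
          n.choose (2 * t + 1) * (2 * t + 1).choose t * (n - 1 - 2 * t).choose (m - 1 - t) := by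
        gcongr
        exact Nat.le_succ _
    _ = ∑ t ∈ range m, n.choose m * ((n - m).choose t * m.choose (t + 1)) :=
        sum_congr rfl fun t ht => by
          rw [Nat.choose_mul_choose_mul_choose_eq (mem_range.mp ht), mul_assoc]
    _ = n.choose m * n.choose (m - 1) := by
        rw [← mul_sum, Nat.sum_range_choose_mul_choose_succ hm hmn]

theorem Nat.choose_le_two_mul_choose_pred {n k : ℕ} (hk : 2 * k ≤ n) :
    n.choose k ≤ 2 * (n - 1).choose k := by
  obtain _ | n := n
  · rw [Nat.zero_sub]; omega
  rw [Nat.add_sub_cancel]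
  refine Nat.le_of_mul_le_mul_right (c := n + 1) ?_ n.succ_pos
  calc (n + 1).choose k * (n + 1) ≤ (n + 1).choose k * (2 * (n + 1 - k)) :=
        Nat.mul_le_mul_left _ (by omega)
    _ = 2 * n.choose k * (n + 1) := by rw [mul_left_comm, ← Nat.choose_mul_succ_eq, mul_assoc]

theorem Nat.mul_sum_range_choose_mul_central_le {n m : ℕ} (hm : 1 ≤ m) (h2m : 2 * m ≤ n) :
    m * ∑ t ∈ range m,
        n.choose (2 * t + 1) * (2 * t).choose t * (n - 1 - 2 * t).choose (m - 1 - t)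
      ≤ 2 * n * (n - 1).choose (m - 1) ^ 2 := by
  have hmul : m * n.choose m = n * (n - 1).choose (m - 1) := by
    have := Nat.add_one_mul_choose_eq (n - 1) (m - 1)
    rw [Nat.sub_add_cancel (by omega : 1 ≤ n), Nat.sub_add_cancel hm] at this
    rw [this, mul_comm]
  calc m * ∑ t ∈ range m,
        n.choose (2 * t + 1) * (2 * t).choose t * (n - 1 - 2 * t).choose (m - 1 - t)
      ≤ m * (n.choose m * (2 * (n - 1).choose (m - 1))) := by
        gcongr
        exact (Nat.sum_range_choose_mul_central_le hm (by omega)).trans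
          (Nat.mul_le_mul_left _ (Nat.choose_le_two_mul_choose_pred (by omega)))
    _ = 2 * n * (n - 1).choose (m - 1) ^ 2 := by rw [← mul_assoc, hmul]; ring

/-- Theorem 4.1: for the unbiased binary alphabet
(`𝒜 = {0,1}`, `p₀ = p₁ = 1/2`) and the alternating word `w = 0101⋯` of length `m`
(`w_j = j mod 2` in 0-indexed form), if `1 ≤ m ≤ n/2` then
`σ₁² ≤ 10 (n/m) C(n-1,m-1)²`. -/
theorem sigma1Sq_alternating_upper_bound (n m : ℕ) (hm : 1 ≤ m) (hmn : (m : ℝ) ≤ n / 2) :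
    sigma1Sq (fun _ : Fin 2 => (1 / 2 : ℝ)) n m (fun j => (⟨(j : ℕ) % 2, by omega⟩ : Fin 2))
      ≤ 10 * ((n : ℝ) / m) * ((n - 1).choose (m - 1) : ℝ) ^ 2 := by
  have h2m : 2 * m ≤ n := by
    have : ((2 * m : ℕ) : ℝ) ≤ n := by push_cast; linarith
    exact_mod_cast this
  have hbound : (m : ℝ) * ∑ t ∈ range m, (n.choose (2 * t + 1) : ℝ) * ((2 * t).choose t : ℝ)
      * ((n - 1 - 2 * t).choose (m - 1 - t) : ℝ) ≤ 2 * n * ((n - 1).choose (m - 1) : ℝ) ^ 2 := by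
    exact_mod_cast Nat.mul_sum_range_choose_mul_central_le hm h2m
  rw [sigma1Sq_alternating_eq hm, sum_sq_coeff_one_sub_X_pow_mul_one_add_X_pow,
    Nat.sub_add_cancel hm, mul_div_assoc', div_mul_eq_mul_div, le_div_iff₀ (by positivity)]
  linarith [show (0 : ℝ) ≤ n * ((n - 1).choose (m - 1) : ℝ) ^ 2 by positivity]
end
end

section
/- Let Z* := p_w^{-1} Z. Then Z* − E[Z*] = Σ_{ℓ=1}^m V_ℓ, and the random variables V_1, …, V_m are pairwise uncorrelated with mean zero: E[V_ℓ] = 0 for all ℓ, and E[V_ℓ V_{ℓ'}] = 0 for ℓ ≠ ℓ'. Consequently Var Z* = Σ_{ℓ=1}^m E[V_ℓ²]. -/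
open MeasureTheory ProbabilityTheory Filter Topology

noncomputable section

/-- The number of occurrences of the word `w` (of length `m`) as a subsequence of the
first `n` letters `x 0, …, x (n-1)` of the text `x`. -/
def subseqCount {A : Type*} [DecidableEq A] (n m : ℕ) (w : Fin m → A) (x : ℕ → A) : ℕ :=
  ((Finset.univ : Finset (Fin m → Fin n)).filter
    (fun α => (∀ i j : Fin m, i < j → α i < α j) ∧ ∀ j, x (α j : ℕ) = w j)).card

/-!
Since `1 + φ_a(x) = p_a⁻¹ 1{x = a}`, the normalised count is
`Z* = ∑_α ∏_j (1 + φ_{w_j}(ξ_{α_j}))` over increasing `α`. Expanding each product over the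
subsets `γ` of positions of `w` and grouping the terms by `β = α ∘ γ` gives `Z* = ∑_ℓ V_ℓ`,
because the number of increasing `α` with `α ∘ γ = β` is `c(β, γ)`: splitting `α` at its last
prescribed value, this count factors as the count for the first `ℓ - 1` prescribed values times
the binomial coefficient of the last gap. The term `V_0` is the constant `C(n, m)`.
A product `∏_k φ(ξ_{β_k})` with `ℓ ≥ 1` factors has mean zero by independence, and so does the
product of two of them with `|β| ≠ |β'|`: some letter `ξ_i` then occurs in exactly one factor,
whose mean is zero. Orthogonality of the `V_ℓ` turns the variance into `∑ E[V_ℓ²]`.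
-/

open Finset
open scoped ENNReal

section StrictMonoMaps

/-- Written as the index set of the sums in `Vell`, so that `Vell` unfolds to sums over it. -/
def strictMonoMaps (ℓ n : ℕ) : Finset (Fin ℓ → Fin n) :=
  univ.filter fun β => ∀ i j : Fin ℓ, i < j → β i < β j

variable {ℓ m n : ℕ}

@[simp]
lemma mem_strictMonoMaps {β : Fin ℓ → Fin n} : β ∈ strictMonoMaps ℓ n ↔ StrictMono β := by
  simp [strictMonoMaps, StrictMono]

lemma injective_val_of_mem_strictMonoMaps {β : Fin ℓ → Fin n} (hβ : β ∈ strictMonoMaps ℓ n) :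
    Function.Injective fun k => (β k : ℕ) :=
  Fin.val_injective.comp (mem_strictMonoMaps.mp hβ).injective

lemma sum_strictMonoMaps_image {M : Type*} [AddCommMonoid M] (f : Finset (Fin n) → M) :
    ∑ β ∈ strictMonoMaps ℓ n, f (univ.image β) = ∑ t ∈ powersetCard ℓ univ, f t := by
  refine sum_bij' (fun β _ => univ.image β)
    (fun t ht => t.orderEmbOfFin (mem_powersetCard.mp ht).2) (fun β hβ => ?_) (fun t _ => ?_)
    (fun β hβ => ?_) (fun t _ => ?_) (fun _ _ => rfl)
  · rw [mem_strictMonoMaps] at hβ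
    simp [card_image_of_injective _ hβ.injective]
  · simpa using (t.orderEmbOfFin _).strictMono
  · exact (orderEmbOfFin_unique _ (fun i => mem_image_of_mem _ (mem_univ i))
      (mem_strictMonoMaps.mp hβ)).symm
  · simp

lemma card_strictMonoMaps : #(strictMonoMaps ℓ n) = n.choose ℓ := by
  rw [card_eq_sum_ones, sum_strictMonoMaps_image (fun _ => 1), ← card_eq_sum_ones,
    card_powersetCard, card_univ, Fintype.card_fin]

lemma natCard_strictMono_and (P : (Fin ℓ → Fin n) → Prop) [DecidablePred P] :
    Nat.card {β // StrictMono β ∧ P β} = #{β ∈ strictMonoMaps ℓ n | P β} := by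
  rw [← Nat.card_eq_finsetCard]
  exact Nat.card_congr (Equiv.subtypeEquivRight fun β => by simp)

lemma exists_notMem_range_of_lt {α : Type*} {ℓ' : ℕ} {β : Fin ℓ → α} {β' : Fin ℓ' → α}
    (hβ' : Function.Injective β') (h : ℓ < ℓ') : ∃ k, β' k ∉ Set.range β := by
  by_contra! hsub
  choose g hg using hsub
  have := Fintype.card_le_of_injective g fun a b hab => hβ' (by rw [← hg a, ← hg b, hab])
  simp only [Fintype.card_fin] at this
  omega

end StrictMonoMaps

section Glue

variable {m n : ℕ} (G : Fin m) (B : Fin n)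

def glue (f : Fin G → Fin B) (g : Fin (m - 1 - G) → Fin (n - 1 - B)) : Fin m → Fin n := fun j =>
  if h : (j : ℕ) < G then ⟨f ⟨j, h⟩, (f ⟨j, h⟩).isLt.trans B.isLt⟩
  else if h' : (j : ℕ) = G then B
  else ⟨B + 1 + g ⟨j - G - 1, by omega⟩, by have := (g ⟨j - G - 1, by omega⟩).isLt; omega⟩

variable {G B} {f : Fin G → Fin B} {g : Fin (m - 1 - G) → Fin (n - 1 - B)}

lemma glue_val_of_lt {j : Fin m} (h : (j : ℕ) < G) : (glue G B f g j : ℕ) = f ⟨j, h⟩ := by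
  rw [glue, dif_pos h]

lemma glue_self : glue G B f g G = B := by
  simp [glue]

lemma glue_val_of_gt {j : Fin m} (h : (G : ℕ) < j) :
    (glue G B f g j : ℕ) = B + 1 + g ⟨j - G - 1, by have := j.isLt; omega⟩ := by
  rw [glue, dif_neg (by omega), dif_neg (by omega)]

lemma strictMono_glue (hf : StrictMono f) (hg : StrictMono g) : StrictMono (glue G B f g) := by
  intro i j hij
  rw [Fin.lt_def] at hij ⊢
  rcases lt_trichotomy (i : ℕ) G with hi | hi | hi <;>
  rcases lt_trichotomy (j : ℕ) G with hj | hj | hj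
  · rw [glue_val_of_lt hi, glue_val_of_lt hj]
    exact hf (Fin.mk_lt_mk.mpr hij)
  · obtain rfl : j = G := Fin.ext hj
    rw [glue_val_of_lt hi, glue_self]
    exact (f _).isLt
  · rw [glue_val_of_lt hi, glue_val_of_gt hj]
    have := (f ⟨i, hi⟩).isLt
    omega
  all_goals try omega
  · obtain rfl : i = G := Fin.ext hi
    rw [glue_self, glue_val_of_gt hj]
    omega
  · rw [glue_val_of_gt hi, glue_val_of_gt hj]
    have := @hg ⟨i - G - 1, by omega⟩ ⟨j - G - 1, by omega⟩ (Fin.mk_lt_mk.mpr (by omega))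
    rw [Fin.lt_def] at this
    omega

end Glue

section SplitAt

variable {m n : ℕ} {G : Fin m} {B : Fin n} {α : Fin m → Fin n}

lemma val_apply_lt_of_lt (hα : StrictMono α ∧ α G = B) {j : ℕ} (hj : j < G) :
    (α ⟨j, hj.trans G.isLt⟩ : ℕ) < B :=
  hα.2 ▸ hα.1 (Fin.mk_lt_mk.mpr hj)

lemma lt_val_apply_of_gt (hα : StrictMono α ∧ α G = B) {j : Fin m} (hj : (G : ℕ) < j) :
    (B : ℕ) < α j :=
  hα.2 ▸ hα.1 (Fin.lt_def.mpr hj)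

variable (G B) in
def leftPart (α : Fin m → Fin n) (hα : StrictMono α ∧ α G = B) : Fin G → Fin B :=
  fun j => ⟨α ⟨j, j.isLt.trans G.isLt⟩, val_apply_lt_of_lt hα j.isLt⟩

variable (G B) in
def rightPart (α : Fin m → Fin n) (hα : StrictMono α ∧ α G = B) :
    Fin (m - 1 - G) → Fin (n - 1 - B) := fun j =>
  have hj : (G : ℕ) + 1 + j < m := by omega
  ⟨α ⟨G + 1 + j, hj⟩ - (B + 1), by
    have := lt_val_apply_of_gt hα (j := ⟨G + 1 + j, hj⟩) (by simp only; omega)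
    have := (α ⟨G + 1 + j, hj⟩).isLt
    omega⟩

lemma strictMono_leftPart (hα : StrictMono α ∧ α G = B) : StrictMono (leftPart G B α hα) :=
  fun _ _ hij => hα.1 (Fin.mk_lt_mk.mpr hij)

lemma strictMono_rightPart (hα : StrictMono α ∧ α G = B) : StrictMono (rightPart G B α hα) := by
  intro i j hij
  rw [Fin.lt_def] at hij
  have hi := lt_val_apply_of_gt hα (j := ⟨G + 1 + i, by omega⟩) (by simp only; omega)
  have := hα.1 (Fin.mk_lt_mk.mpr (show (G : ℕ) + 1 + i < G + 1 + j by omega) :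
    (⟨G + 1 + i, by omega⟩ : Fin m) < ⟨G + 1 + j, by omega⟩)
  rw [Fin.lt_def] at this ⊢
  simp only [rightPart]
  omega

variable (G B)

def splitAt : {α : Fin m → Fin n // StrictMono α ∧ α G = B} ≃
    {f : Fin G → Fin B // StrictMono f} × {g : Fin (m - 1 - G) → Fin (n - 1 - B) // StrictMono g}
    where
  toFun α := (⟨_, strictMono_leftPart α.2⟩, ⟨_, strictMono_rightPart α.2⟩)
  invFun c := ⟨glue G B c.1 c.2, strictMono_glue c.1.2 c.2.2, glue_self⟩
  left_inv α := by
    ext j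
    rcases lt_trichotomy (j : ℕ) G with hj | hj | hj
    · simp [glue_val_of_lt hj, leftPart]
    · obtain rfl : j = G := Fin.ext hj
      simp [glue_self, α.2.2]
    · have hB := lt_val_apply_of_gt α.2 hj
      have hj' : α.1 ⟨G + 1 + (j - G - 1), by omega⟩ = α.1 j :=
        congrArg α.1 (Fin.ext (by simp; omega))
      simp only [glue_val_of_gt hj, rightPart, hj']
      omega
  right_inv c := by
    ext j
    · simp [glue_val_of_lt (G := G) (j := ⟨j, j.isLt.trans G.isLt⟩) j.isLt, leftPart]
    · have hj : (G : ℕ) + 1 + j < m := by omega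
      simp [glue_val_of_gt (G := G) (j := ⟨G + 1 + j, hj⟩) (by simp only; omega), rightPart,
        show (G : ℕ) + 1 + j - G - 1 = j by omega]

end SplitAt

section GapCoeff

variable {N ℓ : ℕ}

lemma extSeq_of_eq_zero (δ : Fin ℓ → ℕ) {k : Fin (ℓ + 2)} (h : (k : ℕ) = 0) :
    extSeq N ℓ δ k = 0 := by
  rw [extSeq, dif_pos h]

lemma extSeq_of_eq_last (δ : Fin ℓ → ℕ) {k : Fin (ℓ + 2)} (h : (k : ℕ) = ℓ + 1) :
    extSeq N ℓ δ k = N + 1 := by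
  rw [extSeq, dif_neg (by omega), dif_pos h]

lemma extSeq_of_pos_of_lt (δ : Fin ℓ → ℕ) {k : Fin (ℓ + 2)} (h0 : 0 < (k : ℕ))
    (h1 : (k : ℕ) < ℓ + 1) : extSeq N ℓ δ k = δ ⟨k - 1, by omega⟩ := by
  rw [extSeq, dif_neg (by omega), dif_neg (by omega)]

lemma extSeq_castSucc (β : Fin (ℓ + 1) → Fin N) (j : Fin (ℓ + 2)) :
    extSeq N (ℓ + 1) (fun i => β i + 1) j.castSucc
      = extSeq (β (Fin.last ℓ)) ℓ (fun i => β i.castSucc + 1) j := by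
  rcases Nat.eq_zero_or_pos (j : ℕ) with h0 | h0
  · rw [extSeq_of_eq_zero _ (by rwa [Fin.val_castSucc]), extSeq_of_eq_zero _ h0]
  rcases eq_or_ne (j : ℕ) (ℓ + 1) with h1 | h1
  · rw [extSeq_of_pos_of_lt _ (by simpa) (by simp [h1]), extSeq_of_eq_last _ h1]
    simp [h1, Fin.last]
  · rw [extSeq_of_pos_of_lt _ (by simpa) (by simp; omega), extSeq_of_pos_of_lt _ h0 (by omega)]
    rfl

lemma gapCoeff_zero {m n : ℕ} (β : Fin 0 → Fin n) (γ : Fin 0 → Fin m) :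
    gapCoeff n m 0 β γ = n.choose m := by
  simp [gapCoeff, extSeq]

def initBelowLast {n : ℕ} (β : Fin (ℓ + 1) → Fin n) (hβ : StrictMono β) :
    Fin ℓ → Fin (β (Fin.last ℓ)) :=
  fun k => ⟨β k.castSucc, hβ (Fin.castSucc_lt_last k)⟩

lemma strictMono_initBelowLast {n : ℕ} {β : Fin (ℓ + 1) → Fin n} (hβ : StrictMono β) :
    StrictMono (initBelowLast β hβ) :=
  fun _ _ hij => hβ (Fin.castSucc_lt_castSucc_iff.mpr hij)

lemma gapCoeff_succ {m n : ℕ} {β : Fin (ℓ + 1) → Fin n} {γ : Fin (ℓ + 1) → Fin m}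
    (hβ : StrictMono β) (hγ : StrictMono γ) :
    gapCoeff n m (ℓ + 1) β γ
      = gapCoeff (β (Fin.last ℓ)) (γ (Fin.last ℓ)) ℓ (initBelowLast β hβ) (initBelowLast γ hγ)
        * (n - 1 - β (Fin.last ℓ)).choose (m - 1 - γ (Fin.last ℓ)) := by
  rw [gapCoeff, gapCoeff, Fin.prod_univ_castSucc]
  congr 1
  · refine prod_congr rfl fun k _ => ?_
    rw [Fin.succ_castSucc, extSeq_castSucc β, extSeq_castSucc β, extSeq_castSucc γ,
      extSeq_castSucc γ]
    rfl
  · rw [extSeq_of_eq_last (k := (Fin.last (ℓ + 1)).succ) _ (by simp),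
      extSeq_of_eq_last (k := (Fin.last (ℓ + 1)).succ) _ (by simp),
      extSeq_of_pos_of_lt _ (by simp) (by simp), extSeq_of_pos_of_lt _ (by simp) (by simp)]
    simp only [Fin.last, Fin.val_castSucc, add_tsub_cancel_right, Nat.add_sub_add_right,
      Nat.sub_right_comm _ 1]

end GapCoeff

section Extensions

variable {ℓ m n : ℕ} {γ : Fin (ℓ + 1) → Fin m} {β : Fin (ℓ + 1) → Fin n}

lemma comp_eq_iff_leftPart_comp_eq (hγ : StrictMono γ) (hβ : StrictMono β) {α : Fin m → Fin n}
    (hα : StrictMono α ∧ α (γ (Fin.last ℓ)) = β (Fin.last ℓ)) :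
    α ∘ γ = β ↔ leftPart _ _ α hα ∘ initBelowLast γ hγ = initBelowLast β hβ := by
  simp [funext_iff, Fin.forall_fin_succ', hα.2, Fin.ext_iff, leftPart, initBelowLast]

lemma card_filter_comp_eq_mul (hγ : StrictMono γ) (hβ : StrictMono β) :
    #{α ∈ strictMonoMaps m n | α ∘ γ = β}
      = #{f ∈ strictMonoMaps (γ (Fin.last ℓ)) (β (Fin.last ℓ)) |
            f ∘ initBelowLast γ hγ = initBelowLast β hβ}
        * #(strictMonoMaps (m - 1 - γ (Fin.last ℓ)) (n - 1 - β (Fin.last ℓ))) := by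
  set G := γ (Fin.last ℓ)
  set B := β (Fin.last ℓ)
  set P : (Fin G → Fin B) → Prop := fun f => f ∘ initBelowLast γ hγ = initBelowLast β hβ
  calc #{α ∈ strictMonoMaps m n | α ∘ γ = β}
      = Nat.card {α : {α : Fin m → Fin n // StrictMono α ∧ α G = B} //
          P (leftPart G B α.1 α.2)} := by
        rw [← natCard_strictMono_and]
        refine Nat.card_congr ((Equiv.subtypeSubtypeEquivSubtypeExists _ _).trans
          (Equiv.subtypeEquivRight fun α => ?_)).symm
        exact ⟨fun ⟨h, hc⟩ => ⟨h.1, (comp_eq_iff_leftPart_comp_eq hγ hβ h).mpr hc⟩,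
          fun ⟨hα, hc⟩ => ⟨⟨hα, congrFun hc _⟩, (comp_eq_iff_leftPart_comp_eq hγ hβ _).mp hc⟩⟩
    _ = Nat.card {f : {f : Fin G → Fin B // StrictMono f} // P f.1} *
        Nat.card {g : Fin (m - 1 - G) → Fin (n - 1 - B) // StrictMono g} := by
        rw [← Nat.card_prod]
        exact Nat.card_congr (((splitAt G B).subtypeEquiv (q := fun c => P c.1.1)
          fun _ => Iff.rfl).trans
          (Equiv.prodSubtypeFstEquivSubtypeProd (p := fun f : {f // StrictMono f} => P f.1)))
    _ = _ := by
        rw [← natCard_strictMono_and, ← Nat.card_eq_finsetCard]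
        congr 1
        · exact Nat.card_congr (Equiv.subtypeSubtypeEquivSubtypeInter StrictMono P)
        · exact Nat.card_congr (Equiv.subtypeEquivRight fun _ => mem_strictMonoMaps.symm)

end Extensions

lemma card_filter_comp_eq_gapCoeff {ℓ m n : ℕ} {γ : Fin ℓ → Fin m} {β : Fin ℓ → Fin n}
    (hγ : StrictMono γ) (hβ : StrictMono β) :
    #{α ∈ strictMonoMaps m n | α ∘ γ = β} = gapCoeff n m ℓ β γ := by
  induction ℓ generalizing m n with
  | zero =>
    rw [gapCoeff_zero, ← card_strictMonoMaps]
    exact congrArg card (filter_true_of_mem fun α _ => funext fun i => i.elim0)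
  | succ ℓ ih =>
    rw [card_filter_comp_eq_mul hγ hβ, ih (strictMono_initBelowLast hγ)
      (strictMono_initBelowLast hβ), card_strictMonoMaps, gapCoeff_succ hβ hγ]

lemma sum_strictMonoMaps_comp {M : Type*} [AddCommMonoid M] {ℓ m n : ℕ} {γ : Fin ℓ → Fin m}
    (hγ : StrictMono γ) (F : (Fin ℓ → Fin n) → M) :
    ∑ α ∈ strictMonoMaps m n, F (α ∘ γ) = ∑ β ∈ strictMonoMaps ℓ n, gapCoeff n m ℓ β γ • F β := by
  have hmaps : ∀ α ∈ strictMonoMaps m n, α ∘ γ ∈ strictMonoMaps ℓ n := fun α hα => by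
    rw [mem_strictMonoMaps] at hα ⊢
    exact hα.comp hγ
  rw [← sum_fiberwise_of_maps_to hmaps]
  refine sum_congr rfl fun β hβ => ?_
  rw [sum_congr rfl fun α hα => congrArg F (mem_filter.mp hα).2, sum_const,
    card_filter_comp_eq_gapCoeff hγ (mem_strictMonoMaps.mp hβ)]

section Decomposition

variable {A : Type*} [DecidableEq A]

lemma one_add_phi (p : A → ℝ) (a x : A) :
    1 + phi p a x = (p a)⁻¹ * if x = a then 1 else 0 := by
  rw [phi]
  ring

lemma inv_prod_mul_subseqCount (p : A → ℝ) {n m : ℕ} (w : Fin m → A) (x : ℕ → A) :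
    (∏ j, p (w j))⁻¹ * (subseqCount n m w x : ℝ)
      = ∑ α ∈ strictMonoMaps m n, ∏ j, (1 + phi p (w j) (x (α j))) := by
  simp only [one_add_phi, prod_mul_distrib, prod_inv_distrib, prod_boole, ← mul_sum, mem_univ,
    forall_const, sum_boole, subseqCount, filter_filter, strictMonoMaps]

lemma Vell_eq {Ω : Type*} (p : A → ℝ) (n m : ℕ) (w : Fin m → A) (ξ : ℕ → Ω → A) (ℓ : ℕ) (ω : Ω) :
    Vell p n m w ξ ℓ ω = ∑ β ∈ strictMonoMaps ℓ n, ∑ γ ∈ strictMonoMaps ℓ m,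
      (gapCoeff n m ℓ β γ : ℝ) * ∏ k, phi p (w (γ k)) (ξ (β k) ω) := rfl

lemma Vell_mul_Vell {Ω : Type*} (p : A → ℝ) (n m : ℕ) (w : Fin m → A) (ξ : ℕ → Ω → A)
    (ℓ ℓ' : ℕ) (ω : Ω) :
    Vell p n m w ξ ℓ ω * Vell p n m w ξ ℓ' ω
      = ∑ β ∈ strictMonoMaps ℓ n, ∑ β' ∈ strictMonoMaps ℓ' n,
          ∑ γ ∈ strictMonoMaps ℓ m, ∑ γ' ∈ strictMonoMaps ℓ' m,
            (gapCoeff n m ℓ β γ * gapCoeff n m ℓ' β' γ' : ℝ) *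
              ((∏ k, phi p (w (γ k)) (ξ (β k) ω)) * ∏ k, phi p (w (γ' k)) (ξ (β' k) ω)) := by
  simp only [Vell_eq, sum_mul_sum, mul_mul_mul_comm]

theorem inv_prod_mul_subseqCount_eq_sum_Vell {Ω : Type*} (p : A → ℝ) (n m : ℕ) (w : Fin m → A)
    (ξ : ℕ → Ω → A) (ω : Ω) :
    (∏ j, p (w j))⁻¹ * (subseqCount n m w (fun i => ξ i ω) : ℝ)
      = ∑ ℓ ∈ range (m + 1), Vell p n m w ξ ℓ ω := by
  simp_rw [inv_prod_mul_subseqCount, prod_one_add]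
  rw [sum_comm, sum_powerset, card_univ, Fintype.card_fin]
  refine sum_congr rfl fun ℓ _ => ?_
  rw [← sum_strictMonoMaps_image fun t =>
      ∑ α ∈ strictMonoMaps m n, ∏ j ∈ t, phi p (w j) (ξ (α j) ω),
    Vell_eq, sum_comm (s := strictMonoMaps ℓ n)]
  refine sum_congr rfl fun γ hγ => ?_
  have hγ := mem_strictMonoMaps.mp hγ
  simp_rw [prod_image fun i _ j _ h => hγ.injective h, ← nsmul_eq_mul (α := ℝ)]
  exact sum_strictMonoMaps_comp hγ fun β => ∏ k, phi p (w (γ k)) (ξ (β k) ω)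

lemma Vell_zero {Ω : Type*} (p : A → ℝ) (n m : ℕ) (w : Fin m → A) (ξ : ℕ → Ω → A) (ω : Ω) :
    Vell p n m w ξ 0 ω = n.choose m := by
  simp [Vell_eq, strictMonoMaps, gapCoeff_zero]

theorem inv_prod_mul_subseqCount_eq_choose_add {Ω : Type*} (p : A → ℝ) (n m : ℕ)
    (w : Fin m → A) (ξ : ℕ → Ω → A) (ω : Ω) :
    (∏ j, p (w j))⁻¹ * (subseqCount n m w (fun i => ξ i ω) : ℝ)
      = n.choose m + ∑ ℓ ∈ Icc 1 m, Vell p n m w ξ ℓ ω := by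
  rw [inv_prod_mul_subseqCount_eq_sum_Vell, range_eq_Ico, sum_eq_sum_Ico_succ_bot m.succ_pos,
    Vell_zero, zero_add, Nat.succ_eq_add_one, Ico_add_one_right_eq_Icc]

end Decomposition

section IndependentLetters

variable {A : Type*} [MeasurableSpace A] {Ω : Type*} [MeasurableSpace Ω] {μ : Measure Ω}
  {ξ : ℕ → Ω → A}

lemma memLp_comp_tuple [Finite A] [MeasurableSingletonClass A] [IsFiniteMeasure μ]
    (hmeas : ∀ i, Measurable (ξ i)) {ι : Type*} [Finite ι] (b : ι → ℕ) (g : (ι → A) → ℝ)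
    (q : ℝ≥0∞) : MemLp (fun ω => g fun k => ξ (b k) ω) q μ :=
  MemLp.of_discrete.comp_of_map (measurable_pi_lambda _ fun k => hmeas (b k)).aemeasurable

lemma integral_phi_eq_zero [MeasurableSingletonClass A] [DecidableEq A] [IsProbabilityMeasure μ]
    {p : A → ℝ} {i : ℕ} (hi : Measurable (ξ i)) {a : A} (hpa : 0 < p a)
    (hdist : μ {ω | ξ i ω = a} = ENNReal.ofReal (p a)) :
    ∫ ω, phi p a (ξ i ω) ∂μ = 0 := by
  have hset : MeasurableSet {ω | ξ i ω = a} := hi (measurableSet_singleton a)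
  have hind : (fun ω => phi p a (ξ i ω))
      = fun ω => (p a)⁻¹ * {ω | ξ i ω = a}.indicator 1 ω - 1 := by
    ext ω
    simp [phi, Set.indicator_apply]
  rw [hind, integral_sub ((integrable_indicator_iff hset).mpr (integrable_const 1).integrableOn
    |>.const_mul _) (integrable_const 1), integral_const_mul, integral_indicator_one hset,
    measureReal_def, hdist, ENNReal.toReal_ofReal hpa.le, inv_mul_cancel₀ hpa.ne']
  simp

lemma integrable_prod_comp [Finite A] [MeasurableSingletonClass A] [IsFiniteMeasure μ]
    (hmeas : ∀ i, Measurable (ξ i)) {ι : Type*} [Fintype ι] (b : ι → ℕ) (f : ι → A → ℝ) :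
    Integrable (fun ω => ∏ k, f k (ξ (b k) ω)) μ :=
  (memLp_comp_tuple hmeas b (fun x => ∏ k, f k (x k)) 1).integrable le_rfl

lemma integrable_prod_comp_mul_prod_comp [Finite A] [MeasurableSingletonClass A]
    [IsFiniteMeasure μ] (hmeas : ∀ i, Measurable (ξ i)) {ι ι' : Type*} [Fintype ι] [Fintype ι']
    (b : ι → ℕ) (b' : ι' → ℕ) (f : ι → A → ℝ) (f' : ι' → A → ℝ) :
    Integrable (fun ω => (∏ k, f k (ξ (b k) ω)) * ∏ k, f' k (ξ (b' k) ω)) μ :=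
  (memLp_comp_tuple hmeas (Sum.elim b b')
    (fun x => (∏ k, f k (x (.inl k))) * ∏ k, f' k (x (.inr k))) 1).integrable le_rfl

lemma integral_sum_sum {ι κ : Type*} (s : Finset ι) (t : Finset κ) {f : ι → κ → Ω → ℝ}
    (hf : ∀ i ∈ s, ∀ j ∈ t, Integrable (f i j) μ) :
    ∫ ω, ∑ i ∈ s, ∑ j ∈ t, f i j ω ∂μ = ∑ i ∈ s, ∑ j ∈ t, ∫ ω, f i j ω ∂μ := by
  rw [integral_finsetSum _ fun i hi => integrable_finsetSum _ (hf i hi)]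
  exact sum_congr rfl fun i hi => integral_finsetSum _ (hf i hi)

variable [Countable A] [MeasurableSingletonClass A]

lemma integral_prod_finset_comp (hmeas : ∀ i, Measurable (ξ i)) (hindep : iIndepFun ξ μ)
    (s : Finset ℕ) (g : ℕ → A → ℝ) :
    ∫ ω, ∏ i ∈ s, g i (ξ i ω) ∂μ = ∏ i ∈ s, ∫ ω, g i (ξ i ω) ∂μ := by
  simp only [← prod_coe_sort s]
  exact (hindep.precomp (g := ((↑) : s → ℕ)) Subtype.val_injective).integral_fun_prod_comp
    (X := fun i : s => ξ i) (f := fun i => g i) (fun i => (hmeas i).aemeasurable)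
    (fun i => (measurable_of_countable _).aestronglyMeasurable)

lemma integral_prod_comp_eq_zero (hmeas : ∀ i, Measurable (ξ i)) (hindep : iIndepFun ξ μ)
    {ι : Type*} [Fintype ι] [DecidableEq ι] (b : ι → ℕ) (f : ι → A → ℝ) {k₀ : ι}
    (huniq : ∀ k, b k = b k₀ → k = k₀) (hzero : ∫ ω, f k₀ (ξ (b k₀) ω) ∂μ = 0) :
    ∫ ω, ∏ k, f k (ξ (b k) ω) ∂μ = 0 := by
  have hfiber : ∀ ω, ∏ k, f k (ξ (b k) ω)
      = ∏ i ∈ univ.image b, ∏ k ∈ {k | b k = i}, f k (ξ i ω) := fun ω => by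
    rw [← prod_fiberwise_of_maps_to fun k _ => mem_image_of_mem b (mem_univ k)]
    exact prod_congr rfl fun i _ => prod_congr rfl fun k hk => by rw [(mem_filter.mp hk).2]
  have hk₀ : ({k | b k = b k₀} : Finset ι) = {k₀} := by
    ext k
    simpa using ⟨huniq k, fun h => h ▸ rfl⟩
  simp_rw [hfiber, ← prod_apply]
  rw [integral_prod_finset_comp hmeas hindep]
  refine prod_eq_zero (mem_image_of_mem b (mem_univ k₀)) ?_
  rw [hk₀]
  simpa using hzero

lemma integral_prod_comp_eq_zero_of_injective (hmeas : ∀ i, Measurable (ξ i))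
    (hindep : iIndepFun ξ μ) {ι : Type*} [Fintype ι] [Nonempty ι] {b : ι → ℕ}
    (hb : Function.Injective b) (f : ι → A → ℝ) (hf : ∀ k, ∫ ω, f k (ξ (b k) ω) ∂μ = 0) :
    ∫ ω, ∏ k, f k (ξ (b k) ω) ∂μ = 0 := by
  classical
  exact integral_prod_comp_eq_zero hmeas hindep b f (k₀ := Classical.arbitrary ι)
    (fun _ h => hb h) (hf _)

lemma integral_prod_comp_mul_prod_comp_eq_zero (hmeas : ∀ i, Measurable (ξ i))
    (hindep : iIndepFun ξ μ) {ι ι' : Type*} [Fintype ι] [Fintype ι'] (b : ι → ℕ) {b' : ι' → ℕ}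
    (hb' : Function.Injective b') (f : ι → A → ℝ) (f' : ι' → A → ℝ) {k₀ : ι'}
    (hk₀ : b' k₀ ∉ Set.range b) (hf' : ∫ ω, f' k₀ (ξ (b' k₀) ω) ∂μ = 0) :
    ∫ ω, (∏ k, f k (ξ (b k) ω)) * ∏ k, f' k (ξ (b' k) ω) ∂μ = 0 := by
  classical
  have hsum : ∀ ω, (∏ k, f k (ξ (b k) ω)) * ∏ k, f' k (ξ (b' k) ω)
      = ∏ k, Sum.elim f f' k (ξ (Sum.elim b b' k) ω) := fun ω => by
    simp [Fintype.prod_sum_type]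
  simp_rw [hsum]
  refine integral_prod_comp_eq_zero hmeas hindep (Sum.elim b b') (Sum.elim f f') (k₀ := .inr k₀)
    ?_ hf'
  rintro (k | k) h
  · exact absurd ⟨k, h⟩ hk₀
  · exact congrArg Sum.inr (hb' h)

end IndependentLetters

section Vell

variable {A : Type*} [Fintype A] [DecidableEq A] [MeasurableSpace A] [MeasurableSingletonClass A]
  {Ω : Type*} [MeasurableSpace Ω] {μ : Measure Ω} [IsFiniteMeasure μ] {ξ : ℕ → Ω → A}
  {p : A → ℝ} {n m : ℕ} {w : Fin m → A}

lemma memLp_Vell (hmeas : ∀ i, Measurable (ξ i)) (ℓ : ℕ) (q : ℝ≥0∞) :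
    MemLp (Vell p n m w ξ ℓ) q μ := by
  rw [show Vell p n m w ξ ℓ = _ from funext (Vell_eq p n m w ξ ℓ)]
  exact memLp_finsetSum _ fun β _ => memLp_finsetSum _ fun γ _ =>
    (memLp_comp_tuple hmeas (fun k => β k) (fun x => ∏ k, phi p (w (γ k)) (x k)) q).const_mul _

lemma integral_Vell (hmeas : ∀ i, Measurable (ξ i)) (ℓ : ℕ) :
    ∫ ω, Vell p n m w ξ ℓ ω ∂μ = ∑ β ∈ strictMonoMaps ℓ n, ∑ γ ∈ strictMonoMaps ℓ m,
      (gapCoeff n m ℓ β γ : ℝ) * ∫ ω, ∏ k, phi p (w (γ k)) (ξ (β k) ω) ∂μ := by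
  simp_rw [Vell_eq, ← integral_const_mul]
  exact integral_sum_sum _ _ fun β _ γ _ => (integrable_prod_comp hmeas _ _).const_mul _

lemma integral_Vell_eq_zero (hmeas : ∀ i, Measurable (ξ i)) (hindep : iIndepFun ξ μ)
    (hcent : ∀ i a, ∫ ω, phi p a (ξ i ω) ∂μ = 0) {ℓ : ℕ} (hℓ : ℓ ≠ 0) :
    ∫ ω, Vell p n m w ξ ℓ ω ∂μ = 0 := by
  have : Nonempty (Fin ℓ) := ⟨⟨0, Nat.pos_of_ne_zero hℓ⟩⟩
  rw [integral_Vell hmeas]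
  refine sum_eq_zero fun β hβ => sum_eq_zero fun γ _ => ?_
  rw [integral_prod_comp_eq_zero_of_injective hmeas hindep
    (injective_val_of_mem_strictMonoMaps hβ) _ fun k => hcent _ _, mul_zero]

lemma integral_Vell_mul_Vell_eq_zero (hmeas : ∀ i, Measurable (ξ i)) (hindep : iIndepFun ξ μ)
    (hcent : ∀ i a, ∫ ω, phi p a (ξ i ω) ∂μ = 0) {ℓ ℓ' : ℕ} (h : ℓ ≠ ℓ') :
    ∫ ω, Vell p n m w ξ ℓ ω * Vell p n m w ξ ℓ' ω ∂μ = 0 := by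
  wlog hlt : ℓ < ℓ' generalizing ℓ ℓ'
  · simp_rw [mul_comm (Vell p n m w ξ ℓ _)]
    exact this h.symm (by omega)
  have hint : ∀ β β' γ γ', Integrable (fun ω => (gapCoeff n m ℓ β γ * gapCoeff n m ℓ' β' γ' : ℝ) *
      ((∏ k, phi p (w (γ k)) (ξ (β k) ω)) * ∏ k, phi p (w (γ' k)) (ξ (β' k) ω))) μ :=
    fun _ _ _ _ => (integrable_prod_comp_mul_prod_comp hmeas _ _ _ _).const_mul _
  simp_rw [Vell_mul_Vell p n m w ξ ℓ ℓ']
  rw [integral_sum_sum _ _ fun β _ β' _ =>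
    integrable_finsetSum _ fun γ _ => integrable_finsetSum _ fun γ' _ => hint β β' γ γ']
  refine sum_eq_zero fun β _ => sum_eq_zero fun β' hβ' => ?_
  rw [integral_sum_sum _ _ fun γ _ γ' _ => hint β β' γ γ']
  refine sum_eq_zero fun γ _ => sum_eq_zero fun γ' _ => ?_
  have hβ' := injective_val_of_mem_strictMonoMaps hβ'
  obtain ⟨k₀, hk₀⟩ := exists_notMem_range_of_lt (β := fun k => (β k : ℕ)) hβ' hlt
  rw [integral_const_mul,
    integral_prod_comp_mul_prod_comp_eq_zero hmeas hindep _ hβ' _ _ hk₀ (hcent _ _), mul_zero]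

lemma integral_inv_prod_mul_subseqCount (hmeas : ∀ i, Measurable (ξ i))
    (hindep : iIndepFun ξ μ) (hcent : ∀ i a, ∫ ω, phi p a (ξ i ω) ∂μ = 0) :
    ∫ ω, (∏ j, p (w j))⁻¹ * (subseqCount n m w (fun i => ξ i ω) : ℝ) ∂μ
      = n.choose m * μ.real Set.univ := by
  have hint : ∀ ℓ, Integrable (Vell p n m w ξ ℓ) μ := fun ℓ =>
    (memLp_Vell hmeas ℓ 1).integrable le_rfl
  simp_rw [inv_prod_mul_subseqCount_eq_choose_add]
  rw [integral_add (integrable_const _) (integrable_finsetSum _ fun ℓ _ => hint ℓ),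
    integral_finsetSum _ fun ℓ _ => hint ℓ, integral_const, smul_eq_mul, mul_comm,
    sum_eq_zero fun ℓ hℓ => integral_Vell_eq_zero hmeas hindep hcent (by grind),
    add_zero]

end Vell

section Variance

variable {Ω : Type*} [MeasurableSpace Ω] {μ : Measure Ω}

lemma variance_eq_sum_integral_sq {ι : Type*} {s : Finset ι} {Y : Ω → ℝ} {V : ι → Ω → ℝ}
    (hV : ∀ i ∈ s, MemLp (V i) 2 μ) (horth : ∀ i ∈ s, ∀ j ∈ s, i ≠ j → ∫ ω, V i ω * V j ω ∂μ = 0)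
    (hY : ∀ ω, Y ω - ∫ ω', Y ω' ∂μ = ∑ i ∈ s, V i ω) :
    variance Y μ = ∑ i ∈ s, ∫ ω, V i ω ^ 2 ∂μ := by
  have hYm : AEMeasurable Y μ :=
    ((memLp_finsetSum s hV).aestronglyMeasurable.aemeasurable.add_const (∫ ω, Y ω ∂μ)).congr
      (ae_of_all _ fun ω => by simp [← hY])
  rw [variance_eq_integral hYm]
  simp_rw [hY, sq, sum_mul_sum]
  rw [integral_sum_sum (f := fun i j ω => V i ω * V j ω) _ _
    fun i hi j hj => (hV i hi).integrable_mul (hV j hj)]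
  refine sum_congr rfl fun i hi => ?_
  rw [sum_eq_single i (fun j hj hji => horth i hi j hj hji.symm) (fun h => absurd hi h)]

end Variance

theorem hoeffding_decomposition_general {A : Type*} [Fintype A] [DecidableEq A]
    [MeasurableSpace A] [MeasurableSingletonClass A]
    (p : A → ℝ) (hp : ∀ a, 0 < p a)
    {Ω : Type*} [MeasurableSpace Ω] (μ : Measure Ω) [IsProbabilityMeasure μ]
    (ξ : ℕ → Ω → A) (hmeas : ∀ i, Measurable (ξ i))
    (hindep : iIndepFun ξ μ)
    (hdist : ∀ i a, μ {ω | ξ i ω = a} = ENNReal.ofReal (p a))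
    (n m : ℕ) (w : Fin m → A) :
    (∀ ω, (∏ j, p (w j))⁻¹ * (subseqCount n m w (fun i => ξ i ω) : ℝ)
          - ∫ ω', (∏ j, p (w j))⁻¹ * (subseqCount n m w (fun i => ξ i ω') : ℝ) ∂μ
        = ∑ ℓ ∈ Finset.Icc 1 m, Vell p n m w ξ ℓ ω)
    ∧ (∀ ℓ ∈ Finset.Icc 1 m, ∫ ω, Vell p n m w ξ ℓ ω ∂μ = 0)
    ∧ (∀ ℓ ∈ Finset.Icc 1 m, ∀ ℓ' ∈ Finset.Icc 1 m, ℓ ≠ ℓ' →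
        ∫ ω, Vell p n m w ξ ℓ ω * Vell p n m w ξ ℓ' ω ∂μ = 0)
    ∧ variance
          (fun ω => (∏ j, p (w j))⁻¹ * (subseqCount n m w (fun i => ξ i ω) : ℝ)) μ
        = ∑ ℓ ∈ Finset.Icc 1 m, ∫ ω, (Vell p n m w ξ ℓ ω) ^ 2 ∂μ := by
  have hcent : ∀ i a, ∫ ω, phi p a (ξ i ω) ∂μ = 0 := fun i a =>
    integral_phi_eq_zero (hmeas i) (hp a) (hdist i a)
  have hmean : ∀ ℓ ∈ Icc 1 m, ∫ ω, Vell p n m w ξ ℓ ω ∂μ = 0 := fun ℓ hℓ =>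
    integral_Vell_eq_zero hmeas hindep hcent (by grind)
  have horth : ∀ ℓ ∈ Icc 1 m, ∀ ℓ' ∈ Icc 1 m, ℓ ≠ ℓ' →
      ∫ ω, Vell p n m w ξ ℓ ω * Vell p n m w ξ ℓ' ω ∂μ = 0 := fun _ _ _ _ h =>
    integral_Vell_mul_Vell_eq_zero hmeas hindep hcent h
  have hdecomp : ∀ ω, (∏ j, p (w j))⁻¹ * (subseqCount n m w (fun i => ξ i ω) : ℝ)
      - ∫ ω', (∏ j, p (w j))⁻¹ * (subseqCount n m w (fun i => ξ i ω') : ℝ) ∂μ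
      = ∑ ℓ ∈ Icc 1 m, Vell p n m w ξ ℓ ω := fun ω => by
    rw [integral_inv_prod_mul_subseqCount hmeas hindep hcent, probReal_univ, mul_one,
      inv_prod_mul_subseqCount_eq_choose_add, add_sub_cancel_left]
  exact ⟨hdecomp, hmean, horth,
    variance_eq_sum_integral_sq (fun ℓ _ => memLp_Vell hmeas ℓ 2) horth hdecomp⟩

/-- the Hoeffding decomposition, eqs. (3.17)–(3.20):
`Z* - E[Z*] = Σ_{ℓ=1}^m V_ℓ`, the `V_ℓ` have mean zero and are pairwise
uncorrelated, and `Var Z* = Σ_{ℓ=1}^m E[V_ℓ²]`. -/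
theorem hoeffding_decomposition {A : Type*} [Fintype A] [DecidableEq A]
    [MeasurableSpace A] [MeasurableSingletonClass A]
    (p : A → ℝ) (hp : ∀ a, 0 < p a) (hsum : ∑ a, p a = 1)
    {Ω : Type*} [MeasurableSpace Ω] (μ : Measure Ω) [IsProbabilityMeasure μ]
    (ξ : ℕ → Ω → A) (hmeas : ∀ i, Measurable (ξ i))
    (hindep : iIndepFun ξ μ)
    (hdist : ∀ i a, μ {ω | ξ i ω = a} = ENNReal.ofReal (p a))
    (n m : ℕ) (w : Fin m → A) (hmn : m ≤ n) :
    (∀ ω, (∏ j, p (w j))⁻¹ * (subseqCount n m w (fun i => ξ i ω) : ℝ)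
          - ∫ ω', (∏ j, p (w j))⁻¹ * (subseqCount n m w (fun i => ξ i ω') : ℝ) ∂μ
        = ∑ ℓ ∈ Finset.Icc 1 m, Vell p n m w ξ ℓ ω)
    ∧ (∀ ℓ ∈ Finset.Icc 1 m, ∫ ω, Vell p n m w ξ ℓ ω ∂μ = 0)
    ∧ (∀ ℓ ∈ Finset.Icc 1 m, ∀ ℓ' ∈ Finset.Icc 1 m, ℓ ≠ ℓ' →
        ∫ ω, Vell p n m w ξ ℓ ω * Vell p n m w ξ ℓ' ω ∂μ = 0)
    ∧ variance
          (fun ω => (∏ j, p (w j))⁻¹ * (subseqCount n m w (fun i => ξ i ω) : ℝ)) μ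
        = ∑ ℓ ∈ Finset.Icc 1 m, ∫ ω, (Vell p n m w ξ ℓ ω) ^ 2 ∂μ :=
  hoeffding_decomposition_general p hp μ ξ hmeas hindep hdist n m w
end
end
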